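/- arXiv:0810.2123 — 7 statements merged into one kernel-verified Lean document; each statement's English description precedes it below -/
import Mathlib

section
/- Let Q be a Markov kernel on X, C a measurable set, lambda a measure on X, and eps_minus, eps_plus positive constants with eps_minus * lambda(A ∩ C) <= Q(x, A ∩ C) <= eps_plus * lambda(A ∩ C) for all x in C, A measurable. Define the kernel R(x, A) = Q(x,A) - eps_minus * 1_C(x) * lambda(A ∩ C). Then R is a nonnegative kernel, and for every x in C and every nonnegative measurable f supported in C, R(x, f) <= rho * Q(x, f) where rho = 1 - eps_minus/eps_plus. -/
/-!
Since `ε₋ λ(A ∩ C) ≤ Q(x, A ∩ C) ≤ Q(x, A)`, the residual kernel is nonnegative. The upper Doeblin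
bound says `Q(x, ·)` restricted to `C` is dominated by `ε₊ λ` restricted to `C`, so
`Q(x, f) ≤ ε₊ λ(f)` for `f` supported in `C`; splitting `Q(x, f) ≤ (1 - ε₋/ε₊) Q(x, f) + (ε₋/ε₊) Q(x, f)`
and bounding the second term by `ε₋ λ(f)` gives the contraction.
-/

open MeasureTheory ProbabilityTheory
open scoped ENNReal NNReal

namespace MeasureTheory

variable {X : Type*} [MeasurableSpace X]

theorem Measure.restrict_le_smul_restrict_of_forall_inter_le {μ ν : Measure X} {C : Set X}
    {c : ℝ≥0∞} (h : ∀ A, MeasurableSet A → μ (A ∩ C) ≤ c * ν (A ∩ C)) :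
    μ.restrict C ≤ c • ν.restrict C :=
  Measure.le_intro fun A hA _ => by
    simpa only [Measure.restrict_apply hA, Measure.smul_apply, smul_eq_mul] using h A hA

theorem lintegral_le_mul_lintegral_of_forall_inter_le {μ ν : Measure X} {C : Set X}
    {c : ℝ≥0∞} (h : ∀ A, MeasurableSet A → μ (A ∩ C) ≤ c * ν (A ∩ C))
    {f : X → ℝ≥0∞} (hf : ∀ x ∉ C, f x = 0) :
    ∫⁻ x, f x ∂μ ≤ c * ∫⁻ x, f x ∂ν := by
  have hsupp : Function.support f ⊆ C := fun x hx => by_contra fun hxC => hx (hf x hxC)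
  calc ∫⁻ x, f x ∂μ = ∫⁻ x in C, f x ∂μ := (setLIntegral_eq_of_support_subset hsupp).symm
    _ ≤ ∫⁻ x, f x ∂(c • ν.restrict C) :=
      lintegral_mono' (Measure.restrict_le_smul_restrict_of_forall_inter_le h) le_rfl
    _ = c * ∫⁻ x, f x ∂ν := by
      rw [lintegral_smul_measure, smul_eq_mul, setLIntegral_eq_of_support_subset hsupp]

end MeasureTheory

theorem NNReal.div_mul_le_self (a b : ℝ≥0) : a / b * b ≤ a := by
  rcases eq_or_ne b 0 with rfl | hb
  · simp
  · rw [div_mul_cancel₀ a hb]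

theorem ENNReal.le_tsub_div_mul_add_mul {a b : ℝ≥0∞} {em ep : ℝ≥0} (h : a ≤ ep * b) :
    a ≤ ((1 - em / ep : ℝ≥0) : ℝ≥0∞) * a + em * b := by
  have hrest : ((em / ep : ℝ≥0) : ℝ≥0∞) * a ≤ em * b :=
    calc ((em / ep : ℝ≥0) : ℝ≥0∞) * a ≤ ((em / ep : ℝ≥0) : ℝ≥0∞) * (ep * b) := by gcongr
      _ = ((em / ep * ep : ℝ≥0) : ℝ≥0∞) * b := by rw [ENNReal.coe_mul, mul_assoc]
      _ ≤ em * b := by gcongr; exact NNReal.div_mul_le_self em ep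
  calc a = ((1 : ℝ≥0) : ℝ≥0∞) * a := by rw [ENNReal.coe_one, one_mul]
    _ ≤ ((1 - em / ep + em / ep : ℝ≥0) : ℝ≥0∞) * a := by gcongr; exact le_tsub_add
    _ = ((1 - em / ep : ℝ≥0) : ℝ≥0∞) * a + ((em / ep : ℝ≥0) : ℝ≥0∞) * a := by
      rw [ENNReal.coe_add, add_mul]
    _ ≤ _ := by gcongr

theorem stmt3_general {X : Type*} [MeasurableSpace X]
    (Q : Kernel X X)
    (C : Set X)
    (lam : Measure X)
    (em ep : ℝ≥0)
    (hLD : ∀ x ∈ C, ∀ A : Set X, MeasurableSet A →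
      (em : ℝ≥0∞) * lam (A ∩ C) ≤ Q x (A ∩ C) ∧
        Q x (A ∩ C) ≤ (ep : ℝ≥0∞) * lam (A ∩ C)) :
    (∀ x ∈ C, ∀ A : Set X, MeasurableSet A → (em : ℝ≥0∞) * lam (A ∩ C) ≤ Q x A) ∧
    (∀ x ∈ C, ∀ f : X → ℝ≥0∞, Measurable f → (∀ x' ∉ C, f x' = 0) →
      ∫⁻ x', f x' ∂(Q x) ≤
        ((1 - em / ep : ℝ≥0) : ℝ≥0∞) * ∫⁻ x', f x' ∂(Q x) +
          (em : ℝ≥0∞) * ∫⁻ x', f x' ∂lam) := by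
  refine ⟨fun x hx A hA => (hLD x hx A hA).1.trans (measure_mono Set.inter_subset_left),
    fun x hx f _ hf => ENNReal.le_tsub_div_mul_add_mul ?_⟩
  exact lintegral_le_mul_lintegral_of_forall_inter_le (fun A hA => (hLD x hx A hA).2) hf

/-- Contraction decomposition underlying Proposition 2: if `C` is a local
Doeblin set for `Q` with constants `0 < ε₋ ≤ ε₊` and measure `λ`, then the
residual kernel `R(x, A) = Q(x, A) - ε₋ 1_C(x) λ(A ∩ C)` is nonnegative
(expressed as `ε₋ λ(A ∩ C) ≤ Q(x, A)` for `x ∈ C`), and for every `x ∈ C` and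
every nonnegative measurable `f` supported in `C`,
`R(x, f) ≤ ρ Q(x, f)` with `ρ = 1 - ε₋/ε₊`, i.e.
`Q(x, f) ≤ ρ Q(x, f) + ε₋ λ(f)`. -/
theorem stmt3 {X : Type*} [MeasurableSpace X]
    (Q : Kernel X X) [IsMarkovKernel Q]
    (C : Set X) (hC : MeasurableSet C)
    (lam : Measure X)
    (em ep : ℝ≥0) (hem : 0 < em) (hle : em ≤ ep)
    (hLD : ∀ x ∈ C, ∀ A : Set X, MeasurableSet A →
      (em : ℝ≥0∞) * lam (A ∩ C) ≤ Q x (A ∩ C) ∧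
        Q x (A ∩ C) ≤ (ep : ℝ≥0∞) * lam (A ∩ C)) :
    (∀ x ∈ C, ∀ A : Set X, MeasurableSet A → (em : ℝ≥0∞) * lam (A ∩ C) ≤ Q x A) ∧
    (∀ x ∈ C, ∀ f : X → ℝ≥0∞, Measurable f → (∀ x' ∉ C, f x' = 0) →
      ∫⁻ x', f x' ∂(Q x) ≤
        ((1 - em / ep : ℝ≥0) : ℝ≥0∞) * ∫⁻ x', f x' ∂(Q x) +
          (em : ℝ≥0∞) * ∫⁻ x', f x' ∂lam) :=
  stmt3_general Q C lam em ep hLD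
end

section
/- Let (X,𝒳) be a measurable space, Q a Markov kernel on X, g: X × Y → (0,∞) measurable, and y_0,...,y_n a sequence in Y. Suppose C: Y → 𝒳 is a set-valued function such that for all y, y' there exist eps⁻(y,y') > 0 and a measure lambda_{y,y'} with eps⁻(y,y') * lambda_{y,y'}(A ∩ C(y')) <= Q(x, A ∩ C(y')) for all x in C(y) and A in 𝒳. Then for any probability measure nu on X, E_nu^Q[ prod_{i=0}^n g(X_i,y_i) ] >= ( prod_{i=2}^n eps⁻(y_{i-1},y_i) ) * nu[ g(·,y_0) Q( g(·,y_1) 1_{C(y_1)} ) ] * prod_{i=2}^n lambda_{y_{i-1},y_i}[ g(·,y_i) 1_{C(y_i)} ]. -/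
/-! Discarding the paths that leave the Doeblin sets `C(y_1), …, C(y_n)` only decreases
the likelihood, since `g ≥ 0`; on those sets each transition
`Q(x_{i-1}, ·)` dominates `ε⁻(y_{i-1}, y_i) λ_{y_{i-1}, y_i}`, so the integrals factorise
one step at a time from the end of the chain. -/

open MeasureTheory ProbabilityTheory
open scoped ENNReal

/-- The unnormalized smoothing functional: `chainLik Q g n y x` is
`E_x^Q [∏_{i=0}^n g(X_i, y_i)]`, i.e. the iterated integral
`g(x, y_0) ∫ Q(x, dx_1) g(x_1, y_1) ⋯ ∫ Q(x_{n-1}, dx_n) g(x_n, y_n)`. -/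
noncomputable def chainLik {X Y : Type*} [MeasurableSpace X]
    (Q : Kernel X X) (g : X → Y → ℝ≥0∞) : ℕ → (ℕ → Y) → X → ℝ≥0∞
  | 0, y, x => g x (y 0)
  | (n + 1), y, x =>
      g x (y 0) * ∫⁻ x', chainLik Q g n (fun k => y (k + 1)) x' ∂(Q x)

section Lintegral

variable {α : Type*} [MeasurableSpace α]

theorem lintegral_indicator_mul_const_le {μ : Measure α} {s : Set α} {f F : α → ℝ≥0∞}
    {c : ℝ≥0∞} (h : ∀ z ∈ s, f z * c ≤ F z) :
    (∫⁻ z, s.indicator f z ∂μ) * c ≤ ∫⁻ z, F z ∂μ := by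
  refine (lintegral_mul_const_le c _).trans (lintegral_mono fun z => ?_)
  by_cases hz : z ∈ s
  · simpa [hz] using h z hz
  · simp [hz]

theorem const_mul_lintegral_indicator_le_of_minorization {μ ν : Measure α} {s : Set α}
    (hs : MeasurableSet s) {c : ℝ≥0∞}
    (hmin : ∀ A, MeasurableSet A → c * ν (A ∩ s) ≤ μ (A ∩ s)) (f : α → ℝ≥0∞) :
    c * ∫⁻ z, s.indicator f z ∂ν ≤ ∫⁻ z, s.indicator f z ∂μ := by
  have hle : c • ν.restrict s ≤ μ.restrict s := Measure.le_iff.2 fun A hA => by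
    simpa [Measure.restrict_apply hA] using hmin A hA
  rw [lintegral_indicator hs, lintegral_indicator hs, ← smul_eq_mul, ← lintegral_smul_measure]
  exact lintegral_mono' hle le_rfl

end Lintegral

theorem Finset.prod_Icc_two_pred_eq_prod_range {M : Type*} [CommMonoid M] (u : ℕ → ℕ → M)
    (m : ℕ) :
    ∏ i ∈ Finset.Icc 2 (m + 1), u (i - 1) i = ∏ i ∈ Finset.range m, u (i + 1) (i + 2) := by
  rw [← Finset.Ico_add_one_right_eq_Icc, Finset.prod_Ico_eq_prod_range]
  refine Finset.prod_congr (by congr 1) fun i _ => ?_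
  rw [show 2 + i - 1 = i + 1 by omega, add_comm 2 i]

section Doeblin

variable {X Y : Type*} [MeasurableSpace X] (Q : Kernel X X) (g : X → Y → ℝ≥0∞)
  (C : Y → Set X) (eps : Y → Y → ℝ≥0∞) (lam : Y → Y → Measure X)

noncomputable def doeblinFactor (y y' : Y) : ℝ≥0∞ :=
  eps y y' * ∫⁻ x, (C y').indicator (fun x => g x y') x ∂(lam y y')

variable {Q g C eps lam}

theorem mul_prod_doeblinFactor_le_chainLik (hC : ∀ y, MeasurableSet (C y))
    (hLD : ∀ y y', ∀ A : Set X, MeasurableSet A → ∀ x ∈ C y,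
      eps y y' * lam y y' (A ∩ C y') ≤ Q x (A ∩ C y'))
    (m : ℕ) (y : ℕ → Y) (x : X) (hx : x ∈ C (y 0)) :
    g x (y 0) * ∏ i ∈ Finset.range m, doeblinFactor g C eps lam (y i) (y (i + 1)) ≤
      chainLik Q g m y x := by
  induction m generalizing y x with
  | zero => simp [chainLik]
  | succ m ih =>
    rw [Finset.prod_range_succ', mul_comm _ (doeblinFactor g C eps lam (y 0) (y 1))]
    refine mul_le_mul_right ?_ _
    calc _ ≤ (∫⁻ z, (C (y 1)).indicator (fun z => g z (y 1)) z ∂(Q x)) *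
          ∏ i ∈ Finset.range m, doeblinFactor g C eps lam (y (i + 1)) (y (i + 1 + 1)) := by
          gcongr
          exact const_mul_lintegral_indicator_le_of_minorization (hC _)
            (fun A hA => hLD _ _ A hA x hx) _
      _ ≤ _ := lintegral_indicator_mul_const_le fun z hz => ih _ z hz

end Doeblin

theorem stmt4_general {X Y : Type*} [MeasurableSpace X]
    (Q : Kernel X X)
    (g : X → Y → ℝ≥0∞)
    (C : Y → Set X) (hC : ∀ y, MeasurableSet (C y))
    (eps : Y → Y → ℝ≥0∞)
    (lam : Y → Y → Measure X)
    (hLD : ∀ y y', ∀ A : Set X, MeasurableSet A → ∀ x ∈ C y,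
      eps y y' * lam y y' (A ∩ C y') ≤ Q x (A ∩ C y'))
    (ν : Measure X)
    (y : ℕ → Y) (n : ℕ) (hn : 1 ≤ n) :
    (∏ i ∈ Finset.Icc 2 n, eps (y (i - 1)) (y i)) *
        (∫⁻ x, g x (y 0) *
          ∫⁻ x', (C (y 1)).indicator (fun x'' => g x'' (y 1)) x' ∂(Q x) ∂ν) *
        ∏ i ∈ Finset.Icc 2 n,
          ∫⁻ x, (C (y i)).indicator (fun x'' => g x'' (y i)) x
            ∂(lam (y (i - 1)) (y i)) ≤
      ∫⁻ x, chainLik Q g n y x ∂ν := by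
  obtain ⟨m, rfl⟩ : ∃ m, n = m + 1 := ⟨n - 1, by omega⟩
  set P := ∏ i ∈ Finset.range m, doeblinFactor g C eps lam (y (i + 1)) (y (i + 2))
  have hP : (∏ i ∈ Finset.Icc 2 (m + 1), eps (y (i - 1)) (y i)) *
      ∏ i ∈ Finset.Icc 2 (m + 1),
        ∫⁻ x, (C (y i)).indicator (fun x'' => g x'' (y i)) x ∂(lam (y (i - 1)) (y i)) =
      P := by
    simp only [Finset.prod_Icc_two_pred_eq_prod_range (fun i j => eps (y i) (y j)),
      Finset.prod_Icc_two_pred_eq_prod_range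
        (fun i j => ∫⁻ x, (C (y j)).indicator (fun x'' => g x'' (y j)) x ∂(lam (y i) (y j))),
      P, doeblinFactor, ← Finset.prod_mul_distrib]
  calc _ = P * ∫⁻ x, g x (y 0) *
          ∫⁻ x', (C (y 1)).indicator (fun x'' => g x'' (y 1)) x' ∂(Q x) ∂ν := by
        rw [← hP]; ring
    _ ≤ ∫⁻ x, P * (g x (y 0) *
          ∫⁻ x', (C (y 1)).indicator (fun x'' => g x'' (y 1)) x' ∂(Q x)) ∂ν :=
        lintegral_const_mul_le _ _
    _ ≤ ∫⁻ x, chainLik Q g (m + 1) y x ∂ν := by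
        refine lintegral_mono fun x => ?_
        rw [mul_left_comm, mul_comm P]
        exact mul_le_mul_right (lintegral_indicator_mul_const_le fun z hz =>
          mul_prod_doeblinFactor_le_chainLik hC hLD m (fun k => y (k + 1)) z hz) _

/-- Proposition 3: lower bound for the unnormalized likelihood
`E_ν^Q[∏_{i=0}^n g(X_i, y_i)]` in terms of a Local Doeblin set function `C`
with lower constants `ε⁻(y,y')` and minorizing measures `λ_{y,y'}`. -/
theorem stmt4 {X Y : Type*} [MeasurableSpace X]
    (Q : Kernel X X) [IsMarkovKernel Q]
    (g : X → Y → ℝ≥0∞) (hg : ∀ y, Measurable (fun x => g x y))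
    (C : Y → Set X) (hC : ∀ y, MeasurableSet (C y))
    (eps : Y → Y → ℝ≥0∞) (heps : ∀ y y', 0 < eps y y')
    (lam : Y → Y → Measure X)
    (hLD : ∀ y y', ∀ A : Set X, MeasurableSet A → ∀ x ∈ C y,
      eps y y' * lam y y' (A ∩ C y') ≤ Q x (A ∩ C y'))
    (ν : Measure X) [IsProbabilityMeasure ν]
    (y : ℕ → Y) (n : ℕ) (hn : 1 ≤ n) :
    (∏ i ∈ Finset.Icc 2 n, eps (y (i - 1)) (y i)) *
        (∫⁻ x, g x (y 0) *
          ∫⁻ x', (C (y 1)).indicator (fun x'' => g x'' (y 1)) x' ∂(Q x) ∂ν) *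
        ∏ i ∈ Finset.Icc 2 n,
          ∫⁻ x, (C (y i)).indicator (fun x'' => g x'' (y i)) x
            ∂(lam (y (i - 1)) (y i)) ≤
      ∫⁻ x, chainLik Q g n y x ∂ν :=
  stmt4_general Q g C hC eps lam hLD ν y n hn
end

section
/- Let Psi_n : ℝ → ℝ be a sequence of nondecreasing functions and Psi : ℝ → ℝ a bounded nondecreasing function such that Psi_n(x) → Psi(x) for every x ∈ ℝ. Then the generalized inverse Psi^{-1}(u) = inf{x : Psi(x) >= u} has at most countably many discontinuity points, and at every point u where Psi^{-1} is continuous, Psi_n^{-1}(u) → Psi^{-1}(u). -/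
/-!
Pointwise convergence `Ψₙ x → Ψ x` turns the strict inequalities `Ψ x < u` and `u < Ψ x` into
eventual inequalities for `Ψₙ`. The first gives `x ≤ Ψₙ⁻¹(u)` eventually for every `x < Ψ⁻¹(u)`,
so `Ψ⁻¹(u) ≤ liminf Ψₙ⁻¹(u)`. The second gives `Ψₙ⁻¹(u) ≤ x` eventually whenever `u' ≤ Ψ x` with
`u < u'`, so `limsup Ψₙ⁻¹(u) ≤ Ψ⁻¹(u')` for every `u' > u`; right-continuity of `Ψ⁻¹` at `u`
closes the gap. Countability of the discontinuities holds because `Ψ⁻¹` is monotone.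
-/

open Filter Topology

/-- The generalized inverse `Ψ^{-1}(u) = inf {x : Ψ(x) ≥ u}`, with values in
the extended reals (so that the infimum of an empty or unbounded set is
`⊤` or `⊥` respectively). -/
noncomputable def genInv (Ψ : ℝ → ℝ) (u : ℝ) : EReal :=
  sInf ((fun x : ℝ => (x : EReal)) '' {x : ℝ | u ≤ Ψ x})

section GenInv

variable {Ψ : ℝ → ℝ}

theorem genInv_mono (Ψ : ℝ → ℝ) : Monotone (genInv Ψ) :=
  fun _ _ huv => sInf_le_sInf <| Set.image_mono fun _ hx => huv.trans hx

theorem genInv_le_of_le {u x : ℝ} (h : u ≤ Ψ x) : genInv Ψ u ≤ x :=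
  sInf_le ⟨x, h, rfl⟩

theorem le_genInv_of_lt (hΨ : Monotone Ψ) {u x : ℝ} (h : Ψ x < u) : (x : EReal) ≤ genInv Ψ u := by
  refine le_sInf ?_
  rintro _ ⟨z, hz, rfl⟩
  exact EReal.coe_le_coe_iff.2 <| le_of_not_gt fun hzx => (hz.trans (hΨ hzx.le)).not_gt h

theorem lt_of_coe_lt_genInv {u x : ℝ} (h : (x : EReal) < genInv Ψ u) : Ψ x < u :=
  lt_of_not_ge fun hux => (genInv_le_of_le hux).not_gt h

end GenInv

section Convergence

variable {Ψn : ℕ → ℝ → ℝ} {Ψ : ℝ → ℝ}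

theorem genInv_le_liminf (hΨn : ∀ n, Monotone (Ψn n))
    (hconv : ∀ x, Tendsto (fun n => Ψn n x) atTop (𝓝 (Ψ x))) (u : ℝ) :
    genInv Ψ u ≤ liminf (fun n => genInv (Ψn n) u) atTop := by
  refine EReal.ge_of_forall_gt_iff_ge.1 fun x hx => ?_
  have hev : ∀ᶠ n in atTop, Ψn n x < u :=
    (hconv x).eventually_lt_const (lt_of_coe_lt_genInv hx)
  exact le_liminf_of_le (by isBoundedDefault) (hev.mono fun n hn => le_genInv_of_lt (hΨn n) hn)

theorem limsup_le_genInv_of_lt (hconv : ∀ x, Tendsto (fun n => Ψn n x) atTop (𝓝 (Ψ x)))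
    {u u' : ℝ} (huu' : u < u') :
    limsup (fun n => genInv (Ψn n) u) atTop ≤ genInv Ψ u' := by
  refine le_sInf ?_
  rintro _ ⟨x, hx, rfl⟩
  have hev : ∀ᶠ n in atTop, u < Ψn n x :=
    (hconv x).eventually_const_lt (huu'.trans_le hx)
  exact limsup_le_of_le (by isBoundedDefault) (hev.mono fun n hn => genInv_le_of_le hn.le)

theorem limsup_le_genInv (hconv : ∀ x, Tendsto (fun n => Ψn n x) atTop (𝓝 (Ψ x))) {u : ℝ}
    (hu : ContinuousWithinAt (genInv Ψ) (Set.Ioi u) u) :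
    limsup (fun n => genInv (Ψn n) u) atTop ≤ genInv Ψ u :=
  ge_of_tendsto hu <| eventually_nhdsWithin_of_forall fun _ hu' =>
    limsup_le_genInv_of_lt hconv hu'

end Convergence

theorem stmt8_general (Ψn : ℕ → ℝ → ℝ) (Ψ : ℝ → ℝ)
    (hΨn : ∀ n, Monotone (Ψn n))
    (hconv : ∀ x, Tendsto (fun n => Ψn n x) atTop (nhds (Ψ x))) :
    {u : ℝ | ¬ ContinuousAt (genInv Ψ) u}.Countable ∧
      ∀ u : ℝ, ContinuousAt (genInv Ψ) u →
        Tendsto (fun n => genInv (Ψn n) u) atTop (nhds (genInv Ψ u)) :=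
  ⟨(genInv_mono Ψ).countable_not_continuousAt, fun u hu =>
    tendsto_of_le_liminf_of_limsup_le (genInv_le_liminf hΨn hconv u)
      (limsup_le_genInv hconv hu.continuousWithinAt)⟩

/-- Lemma 14: if `Ψ_n` are nondecreasing, `Ψ` is bounded and nondecreasing,
and `Ψ_n → Ψ` pointwise, then `Ψ^{-1}` has at most countably many points of
discontinuity and `Ψ_n^{-1}(u) → Ψ^{-1}(u)` at every continuity point `u`
of `Ψ^{-1}`. -/
theorem stmt8 (Ψn : ℕ → ℝ → ℝ) (Ψ : ℝ → ℝ)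
    (hΨn : ∀ n, Monotone (Ψn n)) (hΨ : Monotone Ψ)
    (hbd : ∃ B : ℝ, ∀ x, |Ψ x| ≤ B)
    (hconv : ∀ x, Tendsto (fun n => Ψn n x) atTop (nhds (Ψ x))) :
    {u : ℝ | ¬ ContinuousAt (genInv Ψ) u}.Countable ∧
      ∀ u : ℝ, ContinuousAt (genInv Ψ) u →
        Tendsto (fun n => genInv (Ψn n) u) atTop (nhds (genInv Ψ u)) :=
  stmt8_general Ψn Ψ hΨn hconv
end

section
/- Let {U_k}_{k>=1} be a stationary sequence of m-dependent, almost surely negative real random variables, and fix alpha in (0,1). Then there exists r > 0 such that limsup_{n→∞} (1/n) log P( sum_{k = n - ⌈alpha n⌉ + 1}^{n} U_{n,k} >= -r n ) < 0, where U_{n,1} <= ... <= U_{n,n} are the order statistics of U_1,...,U_n. -/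
open MeasureTheory ProbabilityTheory Filter
open scoped ENNReal

/-
On the event that the `⌈α n⌉` largest values sum to at least `-(c α / 2) n`, at least `α n / 2`
of the (negative) `U_k`, `k ≤ n`, exceed `-c`; by pigeonhole, `⌈α n / (2 (m + 1))⌉` of them lie in
a single residue class mod `m + 1`, and these are independent by `m`-dependence. A union bound over
the at most `2 ^ n` candidate index sets bounds the probability by `2 ^ n p ^ ⌈α n / (2 (m + 1))⌉`
with `p = P(U_1 ≥ -c)`, and `p → 0` as `c → 0` because `U_1 < 0` a.s.; so for `c` small the
probability is at most `e ^ (-n)`. No large deviation theorem for trimmed means is needed.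
-/

open Finset Real

noncomputable def sumOfLargest (g : ℕ → ℝ) (n j : ℕ) : ℝ :=
  ⨆ T : {T : Finset ℕ // T ⊆ Icc 1 n ∧ #T = j}, ∑ k ∈ T.1, g k

def modEqSubsets (n q s : ℕ) : Finset (Finset ℕ) :=
  {S ∈ (Icc 1 n).powerset | #S = s ∧ ∀ i ∈ S, ∀ j ∈ S, i ≡ j [MOD q]}

lemma card_modEqSubsets_le (n q s : ℕ) : #(modEqSubsets n q s) ≤ 2 ^ n :=
  (card_filter_le _ _).trans (by simp)

section Deterministic

variable (g : ℕ → ℝ) (n : ℕ)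

lemma sum_le_neg_mul_card_filter_lt {T : Finset ℕ} (hg : ∀ k ∈ T, g k ≤ 0) (c : ℝ) :
    ∑ k ∈ T, g k ≤ -c * #{k ∈ T | g k < -c} := by
  rw [← sum_filter_add_sum_filter_not T (fun k => g k < -c)]
  have hlt : ∑ k ∈ T with g k < -c, g k ≤ #{k ∈ T | g k < -c} • (-c) :=
    sum_le_card_nsmul _ _ _ fun k hk => (mem_filter.1 hk).2.le
  have hrest : ∑ k ∈ T with ¬g k < -c, g k ≤ 0 := sum_nonpos fun k hk => hg k (mem_filter.1 hk).1
  rw [nsmul_eq_mul] at hlt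
  linarith

lemma sumOfLargest_le {j : ℕ} (hg : ∀ k ∈ Icc 1 n, g k ≤ 0) (hj : j ≤ n) {c : ℝ} (hc : 0 ≤ c) :
    sumOfLargest g n j ≤ -c * (j - #{k ∈ Icc 1 n | -c ≤ g k}) := by
  obtain ⟨T₀, hT₀n, hT₀j⟩ := exists_subset_card_eq (s := Icc 1 n) (by simpa using hj)
  have : Nonempty {T : Finset ℕ // T ⊆ Icc 1 n ∧ #T = j} := ⟨⟨T₀, hT₀n, hT₀j⟩⟩
  refine ciSup_le fun ⟨T, hTn, hTj⟩ => ?_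
  have hsplit : #{k ∈ T | -c ≤ g k} + #{k ∈ T | g k < -c} = j := by
    simpa only [not_le, hTj] using card_filter_add_card_filter_not (s := T) (fun k => -c ≤ g k)
  have hle : #{k ∈ T | -c ≤ g k} ≤ #{k ∈ Icc 1 n | -c ≤ g k} :=
    card_le_card (filter_subset_filter _ hTn)
  have hsum := sum_le_neg_mul_card_filter_lt g (fun k hk => hg k (hTn hk)) c
  have hsplit' : (#{k ∈ T | -c ≤ g k} : ℝ) + #{k ∈ T | g k < -c} = j := by exact_mod_cast hsplit
  have hle' : (#{k ∈ T | -c ≤ g k} : ℝ) ≤ #{k ∈ Icc 1 n | -c ≤ g k} := by exact_mod_cast hle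
  calc ∑ k ∈ T, g k ≤ -c * #{k ∈ T | g k < -c} := hsum
    _ ≤ -c * (j - #{k ∈ Icc 1 n | -c ≤ g k}) := by nlinarith

lemma le_card_filter_of_le_sumOfLargest (hg : ∀ k ∈ Icc 1 n, g k ≤ 0) {α c : ℝ} (hα : α ≤ 1)
    (hc : 0 < c) (h : -(c * α / 2 * n) ≤ sumOfLargest g n ⌈α * n⌉₊) :
    α / 2 * n ≤ #{k ∈ Icc 1 n | -c ≤ g k} := by
  have hj : ⌈α * n⌉₊ ≤ n := Nat.ceil_le.2 (mul_le_of_le_one_left n.cast_nonneg hα)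
  have hupper := sumOfLargest_le g n hg hj hc.le
  have hceil : α * n ≤ ⌈α * n⌉₊ := Nat.le_ceil _
  nlinarith

lemma exists_subset_card_eq_modEq (A : Finset ℕ) {q : ℕ} (hq : 0 < q) {x : ℝ}
    (hx : x * q ≤ #A) : ∃ S ⊆ A, #S = ⌈x⌉₊ ∧ ∀ i ∈ S, ∀ j ∈ S, i ≡ j [MOD q] := by
  obtain ⟨r, -, hr⟩ := exists_le_card_fiber_of_nsmul_le_card_of_maps_to (t := range q) (b := x)
    (f := (· % q)) (fun i _ => mem_range.2 (Nat.mod_lt i hq)) (nonempty_range_iff.2 hq.ne')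
    (by simpa [mul_comm] using hx)
  obtain ⟨S, hSA, hS⟩ := exists_subset_card_eq (Nat.ceil_le.2 hr)
  refine ⟨S, hSA.trans (filter_subset _ _), hS, fun i hi j hj => ?_⟩
  exact ((mem_filter.1 (hSA hi)).2).trans (mem_filter.1 (hSA hj)).2.symm

lemma exists_mem_modEqSubsets_of_le_sumOfLargest (hg : ∀ k ∈ Icc 1 n, g k ≤ 0) {α c : ℝ}
    (hα : α ≤ 1) (hc : 0 < c) {q : ℕ} (hq : 0 < q)
    (h : -(c * α / 2 * n) ≤ sumOfLargest g n ⌈α * n⌉₊) :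
    ∃ S ∈ modEqSubsets n q ⌈α / (2 * q) * n⌉₊, ∀ k ∈ S, -c ≤ g k := by
  have hA := le_card_filter_of_le_sumOfLargest g n hg hα hc h
  obtain ⟨S, hSA, hS, hSq⟩ := exists_subset_card_eq_modEq _ hq (x := α / (2 * q) * n)
    (by field_simp; linarith)
  refine ⟨S, mem_filter.2 ⟨mem_powerset.2 (hSA.trans (filter_subset _ _)), hS, hSq⟩,
    fun k hk => (mem_filter.1 (hSA hk)).2⟩

end Deterministic

section MDependent

variable {Ω : Type*} [MeasurableSpace Ω] {μ : Measure Ω} {U : ℕ → Ω → ℝ} {m : ℕ}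

lemma measure_biInter_eq_prod_of_modEq [IsProbabilityMeasure μ]
    (hdep : ∀ j : ℕ,
      Indep (⨆ i ∈ Set.Icc 1 j, MeasurableSpace.comap (U i) inferInstance)
        (⨆ i ∈ Set.Ici (j + m + 1), MeasurableSpace.comap (U i) inferInstance) μ)
    {E : ℕ → Set Ω} (hE : ∀ k, MeasurableSet[MeasurableSpace.comap (U k) inferInstance] (E k))
    (S : Finset ℕ) (hS₁ : ∀ k ∈ S, 1 ≤ k) (hS : ∀ i ∈ S, ∀ j ∈ S, i ≡ j [MOD m + 1]) :
    μ (⋂ k ∈ S, E k) = ∏ k ∈ S, μ (E k) := by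
  induction S using Finset.induction_on_min with
  | empty => simp
  | insert a S haS ih =>
    have hfar : ∀ k ∈ S, a + m + 1 ≤ k := fun k hk => by
      have hdvd := (Nat.modEq_iff_dvd' (haS k hk).le).1 (hS a (mem_insert_self a S) k
        (mem_insert_of_mem hk))
      have := Nat.le_of_dvd (Nat.sub_pos_of_lt (haS k hk)) hdvd
      omega
    have hpast : MeasurableSet[⨆ i ∈ Set.Icc 1 a, MeasurableSpace.comap (U i) inferInstance]
        (E a) :=
      le_iSup₂ (f := fun i (_ : i ∈ Set.Icc 1 a) => MeasurableSpace.comap (U i) inferInstance) a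
        ⟨hS₁ a (mem_insert_self a S), le_rfl⟩ _ (hE a)
    have hfuture : MeasurableSet[⨆ i ∈ Set.Ici (a + m + 1),
        MeasurableSpace.comap (U i) inferInstance] (⋂ k ∈ S, E k) :=
      .biInter (Set.to_countable _) fun k hk =>
        le_iSup₂ (f := fun i (_ : i ∈ Set.Ici (a + m + 1)) =>
          MeasurableSpace.comap (U i) inferInstance) k (hfar k hk) _ (hE k)
    rw [set_biInter_insert, (Indep_iff _ _ μ).1 (hdep a) _ _ hpast hfuture,
      prod_insert fun ha => lt_irrefl a (haS a ha),
      ih (fun k hk => hS₁ k (mem_insert_of_mem hk))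
        (fun i hi j hj => hS i (mem_insert_of_mem hi) j (mem_insert_of_mem hj))]

lemma measure_preimage_eq_of_stationary (hmeas : ∀ k, Measurable (U k))
    (hstat : ∀ j : ℕ,
      Measure.map (fun ω => fun i : ℕ => U (i + 1 + j) ω) μ =
        Measure.map (fun ω => fun i : ℕ => U (i + 1) ω) μ)
    {B : Set ℝ} (hB : MeasurableSet B) {k : ℕ} (hk : 1 ≤ k) :
    μ (U k ⁻¹' B) = μ (U 1 ⁻¹' B) := by
  obtain ⟨j, rfl⟩ := Nat.exists_eq_add_of_le' hk
  have h := congrArg (fun ν => ν ((fun f : ℕ → ℝ => f 0) ⁻¹' B)) (hstat j)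
  rw [Measure.map_apply (by fun_prop) (measurable_pi_apply 0 hB),
    Measure.map_apply (by fun_prop) (measurable_pi_apply 0 hB)] at h
  simpa only [Set.preimage_preimage, zero_add, add_comm 1 j] using h

lemma measure_le_sumOfLargest_le [IsProbabilityMeasure μ] (hmeas : ∀ k, Measurable (U k))
    (hstat : ∀ j : ℕ,
      Measure.map (fun ω => fun i : ℕ => U (i + 1 + j) ω) μ =
        Measure.map (fun ω => fun i : ℕ => U (i + 1) ω) μ)
    (hdep : ∀ j : ℕ,
      Indep (⨆ i ∈ Set.Icc 1 j, MeasurableSpace.comap (U i) inferInstance)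
        (⨆ i ∈ Set.Ici (j + m + 1), MeasurableSpace.comap (U i) inferInstance) μ)
    (hneg : ∀ k, 1 ≤ k → ∀ᵐ ω ∂μ, U k ω < 0) {α c : ℝ} (hα : α ≤ 1) (hc : 0 < c) (n : ℕ) :
    μ {ω | -(c * α / 2 * n) ≤ sumOfLargest (U · ω) n ⌈α * n⌉₊} ≤
      2 ^ n * μ (U 1 ⁻¹' Set.Ici (-c)) ^ ⌈α / (2 * (m + 1 : ℕ)) * n⌉₊ := by
  set s := ⌈α / (2 * (m + 1 : ℕ)) * n⌉₊
  have hnonpos : ∀ᵐ ω ∂μ, ∀ k ∈ Icc 1 n, U k ω ≤ 0 :=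
    (eventually_all_finset _).2 fun k hk =>
      (hneg k (mem_Icc.1 hk).1).mono fun ω hω => hω.le
  have hcover : {ω | -(c * α / 2 * n) ≤ sumOfLargest (U · ω) n ⌈α * n⌉₊} ≤ᵐ[μ]
      ⋃ S ∈ modEqSubsets n (m + 1) s, ⋂ k ∈ S, U k ⁻¹' Set.Ici (-c) := by
    filter_upwards [hnonpos] with ω hω hevent
    obtain ⟨S, hS, hSc⟩ := exists_mem_modEqSubsets_of_le_sumOfLargest _ n hω hα hc m.succ_pos hevent
    exact Set.mem_iUnion₂.2 ⟨S, hS, Set.mem_iInter₂.2 hSc⟩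
  have hblock : ∀ S ∈ modEqSubsets n (m + 1) s,
      μ (⋂ k ∈ S, U k ⁻¹' Set.Ici (-c)) = μ (U 1 ⁻¹' Set.Ici (-c)) ^ s := by
    intro S hS
    obtain ⟨hSn, hSs, hSq⟩ := mem_filter.1 hS
    have hS₁ : ∀ k ∈ S, 1 ≤ k := fun k hk => (mem_Icc.1 (mem_powerset.1 hSn hk)).1
    rw [measure_biInter_eq_prod_of_modEq hdep (fun k => ⟨_, measurableSet_Ici, rfl⟩) S hS₁ hSq,
      prod_congr rfl fun k hk =>
        measure_preimage_eq_of_stationary hmeas hstat measurableSet_Ici (hS₁ k hk),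
      prod_const, hSs]
  calc _ ≤ μ (⋃ S ∈ modEqSubsets n (m + 1) s, ⋂ k ∈ S, U k ⁻¹' Set.Ici (-c)) :=
        measure_mono_ae hcover
    _ ≤ ∑ S ∈ modEqSubsets n (m + 1) s, μ (⋂ k ∈ S, U k ⁻¹' Set.Ici (-c)) :=
        measure_biUnion_finset_le _ _
    _ = #(modEqSubsets n (m + 1) s) * μ (U 1 ⁻¹' Set.Ici (-c)) ^ s := by
        rw [sum_congr rfl hblock, sum_const, nsmul_eq_mul]
    _ ≤ 2 ^ n * μ (U 1 ⁻¹' Set.Ici (-c)) ^ s := by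
        gcongr
        exact_mod_cast card_modEqSubsets_le n (m + 1) s

end MDependent

lemma exists_pos_measure_preimage_Ici_neg_lt {Ω : Type*} [MeasurableSpace Ω] {μ : Measure Ω}
    [IsFiniteMeasure μ] {X : Ω → ℝ} (hX : Measurable X) (hneg : ∀ᵐ ω ∂μ, X ω < 0) {ε : ℝ≥0∞}
    (hε : 0 < ε) : ∃ c > 0, μ (X ⁻¹' Set.Ici (-c)) < ε := by
  have hlim := tendsto_measure_biInter_gt (μ := μ) (s := fun c : ℝ => X ⁻¹' Set.Ici (-c)) (a := 0)
    (fun c _ => (hX measurableSet_Ici).nullMeasurableSet)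
    (fun c d _ hcd ω (hω : -c ≤ X ω) => show -d ≤ X ω by linarith) ⟨1, one_pos, measure_ne_top _ _⟩
  have hzero : μ (⋂ c > (0 : ℝ), X ⁻¹' Set.Ici (-c)) = 0 := by
    refine measure_mono_null (fun ω hω => ?_) (ae_iff.1 hneg)
    refine not_lt.2 (le_of_forall_pos_le_add fun c hc => ?_)
    have : -c ≤ X ω := Set.mem_iInter₂.1 hω c hc
    linarith
  rw [hzero] at hlim
  exact ((hlim.eventually (gt_mem_nhds hε)).and self_mem_nhdsWithin).exists.imp
    fun c hc => ⟨hc.2, hc.1⟩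

lemma two_pow_mul_pow_le_exp_neg {ρ : ℝ} (hρ : 0 < ρ) {n s : ℕ} (hs : ρ * n ≤ s) :
    2 ^ n * exp (-(log 2 + 1) / ρ) ^ s ≤ exp (-n) := by
  have hlog2 : 0 < log 2 := log_pos one_lt_two
  have hrate : (n : ℝ) * (log 2 + 1) ≤ s * (log 2 + 1) / ρ := by
    rw [le_div_iff₀ hρ]
    nlinarith
  calc 2 ^ n * exp (-(log 2 + 1) / ρ) ^ s = exp (n * log 2 + s * (-(log 2 + 1) / ρ)) := by
        rw [exp_add, exp_nat_mul, exp_nat_mul, exp_log two_pos]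
    _ ≤ exp (-n) := exp_le_exp.2 (by rw [neg_div, mul_neg, ← mul_div_assoc]; linarith)

lemma limsup_inv_mul_log_le_of_le_exp {f : ℕ → ℝ≥0∞} {a : ℝ}
    (h : ∀ᶠ n in atTop, f n ≤ ENNReal.ofReal (exp (-(a * n)))) :
    limsup (fun n : ℕ => (n : EReal)⁻¹ * ENNReal.log (f n)) atTop ≤ (-a : ℝ) := by
  refine limsup_le_of_le (by isBoundedDefault) ?_
  filter_upwards [h, eventually_ge_atTop 1] with n hn hn₁
  have hlog : ENNReal.log (f n) ≤ (-(a * n) : ℝ) := by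
    simpa [ENNReal.log_ofReal, (exp_pos _).not_ge] using ENNReal.log_le_log hn
  have hinv : ((n : EReal))⁻¹ = ((n : ℝ)⁻¹ : ℝ) := by
    rw [EReal.coe_inv, EReal.coe_coe_eq_natCast]
  calc (n : EReal)⁻¹ * ENNReal.log (f n) ≤ ((n : ℝ)⁻¹ : ℝ) * ((-(a * n) : ℝ) : EReal) := by
        rw [hinv]
        exact mul_le_mul_of_nonneg_left hlog (EReal.coe_nonneg.2 (by positivity))
    _ = (-a : ℝ) := by
        rw [← EReal.coe_mul]
        congr 1
        field_simp

theorem stmt10_general {Ω : Type*} [MeasurableSpace Ω] (μ : Measure Ω)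
    [IsProbabilityMeasure μ]
    (U : ℕ → Ω → ℝ) (hmeas : ∀ k, Measurable (U k))
    (m : ℕ)
    (hstat : ∀ j : ℕ,
      Measure.map (fun ω => fun i : ℕ => U (i + 1 + j) ω) μ =
        Measure.map (fun ω => fun i : ℕ => U (i + 1) ω) μ)
    (hdep : ∀ j : ℕ,
      Indep (⨆ i ∈ Set.Icc 1 j, MeasurableSpace.comap (U i) inferInstance)
        (⨆ i ∈ Set.Ici (j + m + 1), MeasurableSpace.comap (U i) inferInstance) μ)
    (hneg : ∀ k, 1 ≤ k → ∀ᵐ ω ∂μ, U k ω < 0)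
    (α : ℝ) (hα0 : 0 < α) (hα1 : α < 1) :
    ∃ r : ℝ, 0 < r ∧
      limsup (fun n : ℕ => ((n : EReal))⁻¹ *
        ENNReal.log (μ {ω |
          -(r * n) ≤ ⨆ T : {T : Finset ℕ //
            T ⊆ Finset.Icc 1 n ∧ T.card = Nat.ceil (α * n)},
            ∑ k ∈ T.1, U k ω})) atTop < 0 := by
  set ρ := α / (2 * (m + 1 : ℕ))
  have hρ : 0 < ρ := by positivity
  obtain ⟨c, hc, hp⟩ := exists_pos_measure_preimage_Ici_neg_lt (hmeas 1) (hneg 1 le_rfl)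
    (ENNReal.ofReal_pos.2 (exp_pos (-(log 2 + 1) / ρ)))
  refine ⟨c * α / 2, by positivity, lt_of_le_of_lt (limsup_inv_mul_log_le_of_le_exp (a := 1)
    (.of_forall fun n => ?_)) (by exact_mod_cast neg_one_lt_zero)⟩
  calc _ ≤ 2 ^ n * μ (U 1 ⁻¹' Set.Ici (-c)) ^ ⌈ρ * n⌉₊ :=
        measure_le_sumOfLargest_le hmeas hstat hdep hneg hα1.le hc n
    _ ≤ 2 ^ n * ENNReal.ofReal (exp (-(log 2 + 1) / ρ)) ^ ⌈ρ * n⌉₊ := by gcongr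
    _ = ENNReal.ofReal (2 ^ n * exp (-(log 2 + 1) / ρ) ^ ⌈ρ * n⌉₊) := by
        rw [ENNReal.ofReal_mul (by positivity), ENNReal.ofReal_pow (exp_pos _).le,
          ENNReal.ofReal_pow zero_le_two, ENNReal.ofReal_ofNat]
    _ ≤ ENNReal.ofReal (exp (-(1 * n))) := by
        rw [one_mul]
        exact ENNReal.ofReal_le_ofReal (two_pow_mul_pow_le_exp_neg hρ (Nat.le_ceil _))

/-- Lemma 16: large deviation bound for the sum of the `⌈α n⌉` largest order
statistics of a stationary `m`-dependent sequence of a.s. negative random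
variables: there exists `r > 0` with
`limsup_n (1/n) log P(∑_{k=n-⌈αn⌉+1}^n U_{n,k} ≥ -rn) < 0`.
The sum of the `⌈α n⌉` largest among `U_1, ..., U_n` is expressed as the
supremum of `∑_{k ∈ T} U_k` over subsets `T ⊆ {1, ..., n}` of cardinality
`⌈α n⌉`. -/
theorem stmt10 {Ω : Type*} [MeasurableSpace Ω] (μ : Measure Ω)
    [IsProbabilityMeasure μ]
    (U : ℕ → Ω → ℝ) (hmeas : ∀ k, Measurable (U k))
    (m : ℕ) (hm : 0 < m)
    (hstat : ∀ j : ℕ,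
      Measure.map (fun ω => fun i : ℕ => U (i + 1 + j) ω) μ =
        Measure.map (fun ω => fun i : ℕ => U (i + 1) ω) μ)
    (hdep : ∀ j : ℕ,
      Indep (⨆ i ∈ Set.Icc 1 j, MeasurableSpace.comap (U i) inferInstance)
        (⨆ i ∈ Set.Ici (j + m + 1), MeasurableSpace.comap (U i) inferInstance) μ)
    (hneg : ∀ k, 1 ≤ k → ∀ᵐ ω ∂μ, U k ω < 0)
    (α : ℝ) (hα0 : 0 < α) (hα1 : α < 1) :
    ∃ r : ℝ, 0 < r ∧
      limsup (fun n : ℕ => ((n : EReal))⁻¹ *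
        ENNReal.log (μ {ω |
          -(r * n) ≤ ⨆ T : {T : Finset ℕ //
            T ⊆ Finset.Icc 1 n ∧ T.card = Nat.ceil (α * n)},
            ∑ k ∈ T.1, U k ω})) atTop < 0 :=
  stmt10_general μ U hmeas m hstat hdep hneg α hα0 hα1
end

section
/- Let gamma: ℝ^n → (0,∞) be a probability density, define gamma⁻(r) = inf_{|s|<=r} gamma(s) and gamma⁺(r) = sup_{|s|<=r} gamma(s), and let Q(x,A) = ∫_A gamma(x' - f(x)) dx' (Lebesgue measure), with f, h, C(y,Delta), D(y,y') as in (E1). Then for all y, y' ∈ ℝ^p, all x ∈ C(y,Delta), and all measurable A: eps⁻(y,y') * Leb(A ∩ C(y',Delta)) <= Q(x, A ∩ C(y',Delta)) <= eps⁺(y,y') * Leb(A ∩ C(y',Delta)), where eps⁻(y,y') = gamma⁻((a+1)b_0 + (a+1)bDelta + D(y,y')) and eps⁺(y,y') = gamma⁺((a+1)b_0 + (a+1)bDelta + D(y,y')). In particular y ↦ C(y,Delta) is a Local Doeblin set function. -/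
/-!
Pick `z, z'` with `h z = y`, `h z' = y'`. The inverse bound on `h` puts `x` within `b₀ + bΔ` of `z`
and every `x' ∈ C(y',Δ)` within `b₀ + bΔ` of `z'`; since `f` is `a`-Lipschitz,
`‖x' - f x‖ ≤ ‖x' - z'‖ + ‖z' - f z‖ + ‖f z - f x‖ ≤ (a+1)(b₀ + bΔ) + D(y,y')`.
So on `C(y',Δ)` the integrand `γ(x' - f x)` takes values of `γ` on a closed ball, which the
continuous `γ` maps onto a compact set; its inf and sup bound the integrand, and integrating the
constants gives the two inequalities.
-/

open MeasureTheory
open scoped ENNReal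

section NormBounds

variable {E F : Type*} [SeminormedAddCommGroup E] [SeminormedAddCommGroup F]
  {f : E → E} {h : E → F} {a b0 b Δ : ℝ}

lemma norm_sub_le_of_norm_apply_sub_le (hb : 0 ≤ b)
    (hinv : ∀ x1 x2, ‖x1 - x2‖ ≤ b0 + b * ‖h x1 - h x2‖) {x z : E}
    (hx : ‖h x - h z‖ ≤ Δ) : ‖x - z‖ ≤ b0 + b * Δ :=
  (hinv x z).trans (by gcongr)

lemma norm_sub_apply_le_of_norm_apply_sub_le (ha : 0 ≤ a) (hb : 0 ≤ b)
    (hf : ∀ x1 x2, ‖f x1 - f x2‖ ≤ a * ‖x1 - x2‖)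
    (hinv : ∀ x1 x2, ‖x1 - x2‖ ≤ b0 + b * ‖h x1 - h x2‖) {x x' z z' : E}
    (hx : ‖h x - h z‖ ≤ Δ) (hx' : ‖h x' - h z'‖ ≤ Δ) :
    ‖x' - f x‖ ≤ (a + 1) * b0 + (a + 1) * b * Δ + ‖f z - z'‖ := by
  have hxz := norm_sub_le_of_norm_apply_sub_le hb hinv hx
  have hx'z' := norm_sub_le_of_norm_apply_sub_le hb hinv hx'
  have hfxz : ‖f z - f x‖ ≤ a * (b0 + b * Δ) := by
    calc ‖f z - f x‖ ≤ a * ‖z - x‖ := hf z x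
      _ ≤ a * (b0 + b * Δ) := by rw [norm_sub_rev]; gcongr
  calc ‖x' - f x‖ = ‖(x' - z') + (f z - f x) - (f z - z')‖ := by abel_nf
    _ ≤ ‖x' - z'‖ + ‖f z - f x‖ + ‖f z - z'‖ := norm_sub_le_of_le (norm_add_le _ _) le_rfl
    _ ≤ (a + 1) * b0 + (a + 1) * b * Δ + ‖f z - z'‖ := by linarith

end NormBounds

lemma isCompact_setOf_exists_norm_le_and_eq {E : Type*} [NormedAddCommGroup E] [ProperSpace E]
    {γ : E → ℝ} (hγ : Continuous γ) (R : ℝ) :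
    IsCompact {r : ℝ | ∃ s, ‖s‖ ≤ R ∧ r = γ s} := by
  convert (isCompact_closedBall (0 : E) R).image hγ using 1
  ext r
  simp [eq_comm]

section SetLIntegralBounds

variable {α : Type*} [MeasurableSpace α] {μ : Measure α} {S : Set α} {g : α → ℝ}

lemma ofReal_mul_measure_le_setLIntegral_ofReal (hg : Measurable g) {m : ℝ}
    (hm : ∀ x ∈ S, m ≤ g x) : ENNReal.ofReal m * μ S ≤ ∫⁻ x in S, ENNReal.ofReal (g x) ∂μ :=
  calc ENNReal.ofReal m * μ S = ∫⁻ _ in S, ENNReal.ofReal m ∂μ := (setLIntegral_const _ _).symm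
    _ ≤ ∫⁻ x in S, ENNReal.ofReal (g x) ∂μ :=
      setLIntegral_mono hg.ennreal_ofReal fun x hx => ENNReal.ofReal_le_ofReal (hm x hx)

lemma setLIntegral_ofReal_le_ofReal_mul_measure {M : ℝ} (hM : ∀ x ∈ S, g x ≤ M) :
    ∫⁻ x in S, ENNReal.ofReal (g x) ∂μ ≤ ENNReal.ofReal M * μ S :=
  calc ∫⁻ x in S, ENNReal.ofReal (g x) ∂μ ≤ ∫⁻ _ in S, ENNReal.ofReal M ∂μ :=
      setLIntegral_mono measurable_const fun x hx => ENNReal.ofReal_le_ofReal (hM x hx)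
    _ = ENNReal.ofReal M * μ S := setLIntegral_const _ _

end SetLIntegralBounds

theorem stmt13_general {dn dp : ℕ}
    (γ : EuclideanSpace ℝ (Fin dn) → ℝ)
    (hγc : Continuous γ)
    (f : EuclideanSpace ℝ (Fin dn) → EuclideanSpace ℝ (Fin dn))
    (h : EuclideanSpace ℝ (Fin dn) → EuclideanSpace ℝ (Fin dp))
    (a b0 b Δ : ℝ) (ha : 0 ≤ a) (hb : 0 ≤ b)
    (hf : ∀ x1 x2, ‖f x1 - f x2‖ ≤ a * ‖x1 - x2‖)
    (hsurj : Function.Surjective h)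
    (hinv : ∀ x1 x2, ‖x1 - x2‖ ≤ b0 + b * ‖h x1 - h x2‖)
    (y y' : EuclideanSpace ℝ (Fin dp))
    (hbdd : BddAbove {r : ℝ | ∃ z z', h z = y ∧ h z' = y' ∧ r = ‖f z - z'‖})
    (x : EuclideanSpace ℝ (Fin dn)) (hx : ‖h x - y‖ ≤ Δ)
    (A : Set (EuclideanSpace ℝ (Fin dn))) :
    ENNReal.ofReal
        (sInf {r : ℝ | ∃ s, ‖s‖ ≤ (a + 1) * b0 + (a + 1) * b * Δ +
            sSup {r' : ℝ | ∃ z z', h z = y ∧ h z' = y' ∧ r' = ‖f z - z'‖} ∧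
          r = γ s}) *
        volume (A ∩ {x' | ‖h x' - y'‖ ≤ Δ}) ≤
      (∫⁻ x' in A ∩ {x' | ‖h x' - y'‖ ≤ Δ}, ENNReal.ofReal (γ (x' - f x))) ∧
    (∫⁻ x' in A ∩ {x' | ‖h x' - y'‖ ≤ Δ}, ENNReal.ofReal (γ (x' - f x))) ≤
      ENNReal.ofReal
        (sSup {r : ℝ | ∃ s, ‖s‖ ≤ (a + 1) * b0 + (a + 1) * b * Δ +
            sSup {r' : ℝ | ∃ z z', h z = y ∧ h z' = y' ∧ r' = ‖f z - z'‖} ∧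
          r = γ s}) *
        volume (A ∩ {x' | ‖h x' - y'‖ ≤ Δ}) := by
  obtain ⟨z, rfl⟩ := hsurj y
  obtain ⟨z', rfl⟩ := hsurj y'
  set R := (a + 1) * b0 + (a + 1) * b * Δ +
    sSup {r' : ℝ | ∃ w w', h w = h z ∧ h w' = h z' ∧ r' = ‖f w - w'‖}
  have hradius : ∀ x' ∈ A ∩ {x' | ‖h x' - h z'‖ ≤ Δ}, ‖x' - f x‖ ≤ R := fun x' hx' =>
    (norm_sub_apply_le_of_norm_apply_sub_le ha hb hf hinv hx hx'.2).trans
      (add_le_add_right (le_csSup hbdd ⟨z, z', rfl, rfl, rfl⟩) _)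
  have hK := isCompact_setOf_exists_norm_le_and_eq hγc R
  exact ⟨ofReal_mul_measure_le_setLIntegral_ofReal (hγc.comp (continuous_sub_right _)).measurable
      fun x' hx' => csInf_le hK.bddBelow ⟨_, hradius x' hx', rfl⟩,
    setLIntegral_ofReal_le_ofReal_mul_measure
      fun x' hx' => le_csSup hK.bddAbove ⟨_, hradius x' hx', rfl⟩⟩

/-- Inequality (35): for the kernel `Q(x, A) = ∫_A γ(x' - f x) dx'` with
positive (continuous) state-noise density `γ`, `f` `a`-Lipschitz, `h`
surjective with `‖x₁-x₂‖ ≤ b₀ + b ‖h x₁ - h x₂‖`,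
`C(y,Δ) = {x : ‖h x - y‖ ≤ Δ}` and
`D(y,y') = sup {‖f z - z'‖ : h z = y, h z' = y'}` (assumed finite), one has
for all `x ∈ C(y,Δ)` and measurable `A`:
`γ⁻(R) Leb(A ∩ C(y',Δ)) ≤ Q(x, A ∩ C(y',Δ)) ≤ γ⁺(R) Leb(A ∩ C(y',Δ))`,
where `R = (a+1)b₀ + (a+1)bΔ + D(y,y')`,
`γ⁻(r) = inf_{‖s‖ ≤ r} γ(s)` and `γ⁺(r) = sup_{‖s‖ ≤ r} γ(s)`.
In particular `y ↦ C(y,Δ)` is a Local Doeblin set function. -/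
theorem stmt13 {dn dp : ℕ}
    (γ : EuclideanSpace ℝ (Fin dn) → ℝ)
    (hγpos : ∀ s, 0 < γ s) (hγc : Continuous γ)
    (hγint : ∫ s, γ s = 1)
    (f : EuclideanSpace ℝ (Fin dn) → EuclideanSpace ℝ (Fin dn))
    (h : EuclideanSpace ℝ (Fin dn) → EuclideanSpace ℝ (Fin dp))
    (a b0 b Δ : ℝ) (ha : 0 ≤ a) (hb0 : 0 ≤ b0) (hb : 0 ≤ b) (hΔ : 0 < Δ)
    (hf : ∀ x1 x2, ‖f x1 - f x2‖ ≤ a * ‖x1 - x2‖)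
    (hsurj : Function.Surjective h)
    (hinv : ∀ x1 x2, ‖x1 - x2‖ ≤ b0 + b * ‖h x1 - h x2‖)
    (y y' : EuclideanSpace ℝ (Fin dp))
    (hbdd : BddAbove {r : ℝ | ∃ z z', h z = y ∧ h z' = y' ∧ r = ‖f z - z'‖})
    (x : EuclideanSpace ℝ (Fin dn)) (hx : ‖h x - y‖ ≤ Δ)
    (A : Set (EuclideanSpace ℝ (Fin dn))) (hA : MeasurableSet A) :
    ENNReal.ofReal
        (sInf {r : ℝ | ∃ s, ‖s‖ ≤ (a + 1) * b0 + (a + 1) * b * Δ +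
            sSup {r' : ℝ | ∃ z z', h z = y ∧ h z' = y' ∧ r' = ‖f z - z'‖} ∧
          r = γ s}) *
        volume (A ∩ {x' | ‖h x' - y'‖ ≤ Δ}) ≤
      (∫⁻ x' in A ∩ {x' | ‖h x' - y'‖ ≤ Δ}, ENNReal.ofReal (γ (x' - f x))) ∧
    (∫⁻ x' in A ∩ {x' | ‖h x' - y'‖ ≤ Δ}, ENNReal.ofReal (γ (x' - f x))) ≤
      ENNReal.ofReal
        (sSup {r : ℝ | ∃ s, ‖s‖ ≤ (a + 1) * b0 + (a + 1) * b * Δ +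
            sSup {r' : ℝ | ∃ z z', h z = y ∧ h z' = y' ∧ r' = ‖f z - z'‖} ∧
          r = γ s}) *
        volume (A ∩ {x' | ‖h x' - y'‖ ≤ Δ}) :=
  stmt13_general γ hγc f h a b0 b Δ ha hb hf hsurj hinv y y' hbdd x hx A
end

section
/- Let h: ℝ^n → ℝ^p be uniformly continuous and surjective, and v: ℝ^p → (0,∞) a density with inf_{|s| <= Delta} v(s) > 0 for every Delta > 0. Define Psi(y', Delta) = ∫_{C(y',Delta)} v(y' - h(x)) dx where C(y',Delta) = {x : |h(x) - y'| <= Delta}. Then for every Delta > 0 there exists varrho_Delta > 0 such that Psi(y', Delta) >= varrho_Delta for all y' ∈ ℝ^p. -/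
open MeasureTheory Metric
open scoped ENNReal

/-! By uniform continuity of `h` there is `δ > 0` with `dist (h x) (h z) < Δ` whenever
`dist x z < δ`. Choosing `z` with `h z = y'` (surjectivity), the ball `ball z δ` lies in
`C(y', Δ)` and the integrand is at least `c = inf_{‖s‖ ≤ Δ} v s` on it, so
`Ψ(y', Δ) ≥ c · vol (ball z δ) = c · vol (ball 0 δ)`, independently of `y'`. -/

theorem mul_measure_ball_le_setLIntegral {X : Type*} [PseudoMetricSpace X] [MeasurableSpace X]
    [OpensMeasurableSpace X] (μ : Measure X) {s : Set X} {f : X → ℝ≥0∞} {c : ℝ≥0∞} {z : X}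
    {δ : ℝ} (hsub : ball z δ ⊆ s) (hf : ∀ x ∈ ball z δ, c ≤ f x) :
    c * μ (ball z δ) ≤ ∫⁻ x in s, f x ∂μ :=
  calc c * μ (ball z δ) = ∫⁻ _ in ball z δ, c ∂μ := (setLIntegral_const _ _).symm
    _ ≤ ∫⁻ x in ball z δ, f x ∂μ := setLIntegral_mono' measurableSet_ball hf
    _ ≤ ∫⁻ x in s, f x ∂μ := lintegral_mono' (Measure.restrict_mono hsub le_rfl) le_rfl

theorem exists_forall_mul_measure_ball_le_setLIntegral_preimage_closedBall
    {E F : Type*} [NormedAddCommGroup E] [MeasurableSpace E] [BorelSpace E]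
    (μ : Measure E) [μ.IsAddHaarMeasure] [SeminormedAddCommGroup F]
    {h : E → F} (huc : UniformContinuous h) (hsurj : Function.Surjective h)
    {f : F → ℝ≥0∞} {c : ℝ≥0∞} {Δ : ℝ} (hΔ : 0 < Δ) (hf : ∀ s, ‖s‖ ≤ Δ → c ≤ f s) :
    ∃ δ > 0, ∀ y, c * μ (ball 0 δ) ≤ ∫⁻ x in {x | ‖h x - y‖ ≤ Δ}, f (y - h x) ∂μ := by
  obtain ⟨δ, hδ, hδh⟩ := Metric.uniformContinuous_iff.mp huc Δ hΔ
  refine ⟨δ, hδ, fun y => ?_⟩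
  obtain ⟨z, rfl⟩ := hsurj y
  have hclose : ∀ x ∈ ball z δ, ‖h x - h z‖ ≤ Δ := fun x hx =>
    (dist_eq_norm (h x) (h z) ▸ hδh (mem_ball.mp hx)).le
  rw [← Measure.addHaar_ball_center μ z]
  exact mul_measure_ball_le_setLIntegral μ hclose fun x hx =>
    hf _ (norm_sub_rev (h x) (h z) ▸ hclose x hx)

theorem stmt15_general {dn dp : ℕ}
    (h : EuclideanSpace ℝ (Fin dn) → EuclideanSpace ℝ (Fin dp))
    (huc : UniformContinuous h) (hsurj : Function.Surjective h)
    (v : EuclideanSpace ℝ (Fin dp) → ℝ)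
    (hvinf : ∀ Δ : ℝ, 0 < Δ → ∃ c : ℝ, 0 < c ∧ ∀ s, ‖s‖ ≤ Δ → c ≤ v s) :
    ∀ Δ : ℝ, 0 < Δ → ∃ ϱ : ℝ, 0 < ϱ ∧
      ∀ y' : EuclideanSpace ℝ (Fin dp),
        ENNReal.ofReal ϱ ≤
          ∫⁻ x in {x | ‖h x - y'‖ ≤ Δ}, ENNReal.ofReal (v (y' - h x)) := by
  intro Δ hΔ
  obtain ⟨c, hc, hcv⟩ := hvinf Δ hΔ
  obtain ⟨δ, hδ, hbound⟩ :=
    exists_forall_mul_measure_ball_le_setLIntegral_preimage_closedBall volume huc hsurj hΔ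
      fun s hs => ENNReal.ofReal_le_ofReal (hcv s hs)
  have hball_fin : volume (ball (0 : EuclideanSpace ℝ (Fin dn)) δ) ≠ ∞ := measure_ball_lt_top.ne
  refine ⟨c * (volume (ball (0 : EuclideanSpace ℝ (Fin dn)) δ)).toReal,
    mul_pos hc (ENNReal.toReal_pos (measure_ball_pos _ _ hδ).ne' hball_fin), fun y' => ?_⟩
  rw [ENNReal.ofReal_mul hc.le, ENNReal.ofReal_toReal hball_fin]
  exact hbound y'

/-- Inequality (55): if `h` is uniformly continuous and surjective and the
positive density `v` is bounded below on every ball, then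
`Ψ(y', Δ) = ∫_{C(y',Δ)} v(y' - h x) dx`, with
`C(y',Δ) = {x : ‖h x - y'‖ ≤ Δ}`, is bounded below by some `ϱ_Δ > 0`
uniformly in `y'`. -/
theorem stmt15 {dn dp : ℕ}
    (h : EuclideanSpace ℝ (Fin dn) → EuclideanSpace ℝ (Fin dp))
    (huc : UniformContinuous h) (hsurj : Function.Surjective h)
    (v : EuclideanSpace ℝ (Fin dp) → ℝ) (hvpos : ∀ s, 0 < v s)
    (hvinf : ∀ Δ : ℝ, 0 < Δ → ∃ c : ℝ, 0 < c ∧ ∀ s, ‖s‖ ≤ Δ → c ≤ v s) :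
    ∀ Δ : ℝ, 0 < Δ → ∃ ϱ : ℝ, 0 < ϱ ∧
      ∀ y' : EuclideanSpace ℝ (Fin dp),
        ENNReal.ofReal ϱ ≤
          ∫⁻ x in {x | ‖h x - y'‖ ≤ Δ}, ENNReal.ofReal (v (y' - h x)) :=
  stmt15_general h huc hsurj v hvinf
end

section
/- Let {U_k}_{k>=1} be random variables adapted to a filtration {H_k}, and suppose there exist a constant c > 0 and an integrable random variable U with E[|U| log⁺|U|] < ∞ such that P(|U_k| > x) <= c P(|U| > x) for all x > 0 and all k. Then (1/n) sum_{k=1}^n ( U_k - E[U_k | H_{k-1}] ) → 0 almost surely. -/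
/-!
Truncate `U_k` at level `k`, writing `U_k = T_k + R_k`. Comparing tails with those of `V`
(layer-cake formula) gives `∑ k⁻² E[T_k²] ≤ 2 c E|V|` and `∑ k⁻¹ E|R_k| ≤ c E[2|V| + |V| log⁺|V|]`.
The first bound makes `∑ k⁻¹ (T_k - E[T_k | H_{k-1}])` an L²-bounded martingale, hence a.s.
convergent; the second makes `∑ k⁻¹ (R_k - E[R_k | H_{k-1}])` converge absolutely a.s., as
conditional expectation contracts the L¹ norm. So `∑ k⁻¹ (U_k - E[U_k | H_{k-1}])` converges a.s.,
and Kronecker's lemma turns this into the Cesàro statement.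
-/

open MeasureTheory Filter ProbabilityTheory Finset
open scoped ENNReal NNReal Topology

lemma sum_range_eq_mul_sub_sum_partialSums (x : ℕ → ℝ) (n : ℕ) :
    ∑ k ∈ range n, x k = n * ∑ k ∈ range n, (k + 1 : ℝ)⁻¹ * x k
      - ∑ j ∈ range n, ∑ k ∈ range j, (k + 1 : ℝ)⁻¹ * x k := by
  induction n with
  | zero => simp
  | succ n ih =>
    simp only [sum_range_succ, ih]
    push_cast
    field_simp
    ring

theorem tendsto_inv_mul_sum_of_tendsto_sum_inv_mul {x : ℕ → ℝ} {l : ℝ}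
    (h : Tendsto (fun n => ∑ k ∈ range n, (k + 1 : ℝ)⁻¹ * x k) atTop (𝓝 l)) :
    Tendsto (fun n : ℕ => (n : ℝ)⁻¹ * ∑ k ∈ range n, x k) atTop (𝓝 0) := by
  refine (sub_self l ▸ h.sub h.cesaro).congr' ?_
  filter_upwards [eventually_ne_atTop 0] with n hn
  rw [sum_range_eq_mul_sub_sum_partialSums x n, mul_sub,
    inv_mul_cancel_left₀ (Nat.cast_ne_zero.2 hn)]

lemma sum_range_min_sq_mul_inv_sq_le {w : ℝ} (hw : 0 ≤ w) (n : ℕ) :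
    ∑ k ∈ range n, (k + 1 : ℝ)⁻¹ ^ 2 * min w (k + 1) ^ 2 ≤ 2 * w := by
  -- `Φ` is a concave antiderivative of `min 1 (w / x) ^ 2` bounded by `2 * w`, so its increment
  -- over `[k, k + 1]` dominates the `k`-th term.
  let Φ : ℕ → ℝ := fun j => if (j : ℝ) ≤ w then j else 2 * w - w ^ 2 / j
  have hstep : ∀ k : ℕ, (k + 1 : ℝ)⁻¹ ^ 2 * min w (k + 1) ^ 2 ≤ Φ (k + 1) - Φ k := by
    intro k
    have hk : (0 : ℝ) < k + 1 := by positivity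
    simp only [Φ, Nat.cast_succ]
    split_ifs with h1 h2 h2
    · rw [min_eq_right h1, inv_pow, inv_mul_cancel₀ (by positivity)]; linarith
    · linarith
    · rw [min_eq_left (by linarith), inv_pow, inv_mul_eq_div, div_le_iff₀ (by positivity)]
      replace h1 := not_le.1 h1
      have : w ^ 2 / (k + 1) * (k + 1) ^ 2 = w ^ 2 * (k + 1) := by field_simp
      rw [sub_mul, sub_mul, this]
      nlinarith [mul_nonneg (by linarith : (0 : ℝ) ≤ k + 1 - w)
        (by nlinarith : (0 : ℝ) ≤ (k + 2) * w - (k + 1) * k)]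
    · replace h1 := not_le.1 h1
      replace h2 := not_le.1 h2
      have hk0 : (0 : ℝ) < k := hw.trans_lt h2
      rw [min_eq_left h1.le, inv_pow, inv_mul_eq_div, div_le_iff₀ (by positivity)]
      have : (2 * w - w ^ 2 / (k + 1) - (2 * w - w ^ 2 / k)) * (k + 1) ^ 2
          = w ^ 2 * (k + 1) / k := by
        field_simp; ring
      rw [this, le_div_iff₀ hk0]
      nlinarith [sq_nonneg w]
  calc ∑ k ∈ range n, (k + 1 : ℝ)⁻¹ ^ 2 * min w (k + 1) ^ 2
      ≤ ∑ k ∈ range n, (Φ (k + 1) - Φ k) := sum_le_sum fun k _ => hstep k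
    _ = Φ n - Φ 0 := sum_range_sub Φ n
    _ ≤ 2 * w := by
      simp only [Φ, Nat.cast_zero, hw, if_true, sub_zero]
      split_ifs <;> nlinarith [div_nonneg (sq_nonneg w) (Nat.cast_nonneg (α := ℝ) n)]

lemma sum_range_ite_lt_mul_inv_le {w : ℝ} (hw : 0 ≤ w) (n : ℕ) :
    ∑ k ∈ range n, (k + 1 : ℝ)⁻¹ * (if (k : ℝ) < w then w else 0)
      ≤ 2 * w + w * max (Real.log w) 0 := by
  set N := ⌈w⌉₊
  have hlog : Real.log N ≤ 1 + max (Real.log w) 0 := by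
    rcases le_or_gt w 1 with hw1 | hw1
    · have hN : (N : ℝ) ≤ 1 := by exact_mod_cast Nat.ceil_le.2 (by simpa using hw1)
      linarith [Real.log_le_self (Nat.cast_nonneg (α := ℝ) N), le_max_right (Real.log w) 0]
    · have hN : (N : ℝ) < 2 * w := by linarith [Nat.ceil_lt_add_one hw]
      have hN0 : (0 : ℝ) < N := by exact_mod_cast Nat.ceil_pos.2 (by linarith)
      calc Real.log N ≤ Real.log (2 * w) := Real.log_le_log hN0 hN.le
        _ = Real.log 2 + Real.log w := Real.log_mul two_ne_zero (by positivity)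
        _ ≤ 1 + max (Real.log w) 0 := by
          linarith [Real.log_two_lt_d9, le_max_left (Real.log w) 0]
  calc ∑ k ∈ range n, (k + 1 : ℝ)⁻¹ * (if (k : ℝ) < w then w else 0)
      = ∑ k ∈ (range n).filter (fun k : ℕ => (k : ℝ) < w), w * (k + 1 : ℝ)⁻¹ := by
        rw [sum_filter]; exact sum_congr rfl fun k _ => by split_ifs <;> ring
    _ ≤ ∑ k ∈ range N, w * (k + 1 : ℝ)⁻¹ :=
        sum_le_sum_of_subset_of_nonneg
          (fun k hk => by simpa [N, Nat.lt_ceil] using (mem_filter.1 hk).2)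
          fun k _ _ => by positivity
    _ = w * harmonic N := by simp [harmonic, mul_sum]
    _ ≤ w * (1 + Real.log N) := by gcongr; exact harmonic_le_one_add_log N
    _ ≤ 2 * w + w * max (Real.log w) 0 := by nlinarith

section Martingale

variable {Ω : Type*} {m0 : MeasurableSpace Ω} {μ : Measure Ω} {ℱ : Filtration ℕ m0}

theorem martingale_sum_of_condExp_eq_zero {E : Type*} [NormedAddCommGroup E] [NormedSpace ℝ E]
    [CompleteSpace E] [IsFiniteMeasure μ] {d : ℕ → Ω → E}
    (hmeas : ∀ k, StronglyMeasurable[ℱ (k + 1)] (d k)) (hint : ∀ k, Integrable (d k) μ)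
    (hcond : ∀ k, μ[d k | ℱ k] =ᵐ[μ] 0) :
    Martingale (fun n => ∑ k ∈ range n, d k) ℱ μ := by
  refine martingale_of_condExp_sub_eq_zero_nat (fun n => ?_)
    (fun n => integrable_finsetSum' _ fun k _ => hint k) fun n => ?_
  · exact Finset.stronglyMeasurable_sum _ fun k hk => (hmeas k).mono (ℱ.mono (mem_range.1 hk))
  · simpa [sum_range_succ] using hcond n

theorem MeasureTheory.Martingale.integral_mul_eq_integral_sq [IsFiniteMeasure μ]
    {f : ℕ → Ω → ℝ} (hf : Martingale f ℱ μ) (hL2 : ∀ n, MemLp (f n) 2 μ) {i j : ℕ} (hij : i ≤ j) :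
    ∫ ω, f i ω * f j ω ∂μ = ∫ ω, f i ω ^ 2 ∂μ := by
  have hprod : Integrable (f i * f j) μ := (hL2 i).integrable_mul (hL2 j)
  calc ∫ ω, f i ω * f j ω ∂μ = ∫ ω, (μ[f i * f j | ℱ i]) ω ∂μ :=
        (integral_condExp (ℱ.le i)).symm
    _ = ∫ ω, f i ω * f i ω ∂μ := by
      refine integral_congr_ae ?_
      filter_upwards [condExp_mul_of_stronglyMeasurable_left (hf.stronglyAdapted i) hprod
        (hf.integrable j), hf.condExp_ae_eq hij] with ω h1 h2
      rw [h1, Pi.mul_apply, h2]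
    _ = ∫ ω, f i ω ^ 2 ∂μ := by simp_rw [sq]

theorem MeasureTheory.Martingale.integral_sq_sub_eq [IsFiniteMeasure μ] {f : ℕ → Ω → ℝ}
    (hf : Martingale f ℱ μ) (hL2 : ∀ n, MemLp (f n) 2 μ) {i j : ℕ} (hij : i ≤ j) :
    ∫ ω, (f j ω - f i ω) ^ 2 ∂μ = ∫ ω, f j ω ^ 2 ∂μ - ∫ ω, f i ω ^ 2 ∂μ := by
  have hsq : ∀ n, Integrable (fun ω => f n ω ^ 2) μ := fun n => (hL2 n).integrable_sq
  have hprod : Integrable (fun ω => f i ω * f j ω) μ := (hL2 i).integrable_mul (hL2 j)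
  calc ∫ ω, (f j ω - f i ω) ^ 2 ∂μ
      = ∫ ω, (f j ω ^ 2 - 2 * (f i ω * f j ω) + f i ω ^ 2) ∂μ := by congr with ω; ring
    _ = ∫ ω, f j ω ^ 2 ∂μ - 2 * ∫ ω, f i ω * f j ω ∂μ + ∫ ω, f i ω ^ 2 ∂μ := by
      rw [integral_add (f := fun ω => f j ω ^ 2 - 2 * (f i ω * f j ω))
          ((hsq j).sub (hprod.const_mul 2)) (hsq i),
        integral_sub (hsq j) (hprod.const_mul 2), integral_const_mul]
    _ = ∫ ω, f j ω ^ 2 ∂μ - ∫ ω, f i ω ^ 2 ∂μ := by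
      rw [hf.integral_mul_eq_integral_sq hL2 hij]; ring

theorem MeasureTheory.Martingale.exists_ae_tendsto_of_integral_sq_le [IsProbabilityMeasure μ]
    {f : ℕ → Ω → ℝ} (hf : Martingale f ℱ μ) (hL2 : ∀ n, MemLp (f n) 2 μ) {R : ℝ}
    (hR : ∀ n, ∫ ω, f n ω ^ 2 ∂μ ≤ R) :
    ∀ᵐ ω ∂μ, ∃ l, Tendsto (fun n => f n ω) atTop (𝓝 l) := by
  refine hf.submartingale.exists_ae_tendsto_of_bdd (R := (R + 1).toNNReal) fun n => ?_
  have hL1 : ∫ ω, ‖f n ω‖ ∂μ ≤ R + 1 := calc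
    ∫ ω, ‖f n ω‖ ∂μ ≤ ∫ ω, (f n ω ^ 2 + 1) ∂μ :=
      integral_mono (hf.integrable n).norm ((hL2 n).integrable_sq.add (integrable_const 1))
        fun ω => by
          rw [Real.norm_eq_abs]
          nlinarith [sq_abs (f n ω), sq_nonneg (|f n ω| - 1)]
    _ ≤ R + 1 := by
      rw [integral_add (hL2 n).integrable_sq (integrable_const 1)]
      simpa using hR n
  rw [eLpNorm_one_eq_lintegral_enorm,
    ← ofReal_integral_norm_eq_lintegral_enorm (hf.integrable n)]
  exact ENNReal.ofReal_le_ofReal hL1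

theorem ae_exists_tendsto_sum_of_condExp_eq_zero [IsProbabilityMeasure μ] {d : ℕ → Ω → ℝ}
    (hmeas : ∀ k, StronglyMeasurable[ℱ (k + 1)] (d k)) (hL2 : ∀ k, MemLp (d k) 2 μ)
    (hcond : ∀ k, μ[d k | ℱ k] =ᵐ[μ] 0) (hsum : Summable fun k => ∫ ω, d k ω ^ 2 ∂μ) :
    ∀ᵐ ω ∂μ, ∃ l, Tendsto (fun n => ∑ k ∈ range n, d k ω) atTop (𝓝 l) := by
  have hM := martingale_sum_of_condExp_eq_zero hmeas (fun k => (hL2 k).integrable one_le_two)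
    hcond
  have hML2 : ∀ n, MemLp (∑ k ∈ range n, d k) 2 μ :=
    fun n => memLp_finsetSum' _ fun k _ => hL2 k
  have hsq : ∀ n, ∫ ω, (∑ k ∈ range n, d k) ω ^ 2 ∂μ = ∑ k ∈ range n, ∫ ω, d k ω ^ 2 ∂μ := by
    intro n
    induction n with
    | zero => simp
    | succ n ih =>
      have h := hM.integral_sq_sub_eq hML2 n.le_succ
      simp only [sum_range_succ, Finset.sum_apply, add_sub_cancel_left] at h ih ⊢
      linarith
  simpa only [Finset.sum_apply] using hM.exists_ae_tendsto_of_integral_sq_le hML2 fun n =>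
    (hsq n).trans_le (hsum.sum_le_tsum _ fun k _ => integral_nonneg fun ω => sq_nonneg _)

theorem integral_sq_sub_condExp_le [IsProbabilityMeasure μ] {m : MeasurableSpace Ω}
    (hm : m ≤ m0) {X : Ω → ℝ} (hX : MemLp X 2 μ) :
    ∫ ω, (X ω - (μ[X | m]) ω) ^ 2 ∂μ ≤ ∫ ω, X ω ^ 2 ∂μ := by
  have htotal := integral_condVar_add_variance_condExp hm hX
  have hcondVar : ∫ ω, (Var[X; μ | m]) ω ∂μ = ∫ ω, (X ω - (μ[X | m]) ω) ^ 2 ∂μ :=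
    integral_condExp hm
  have hvar : Var[X; μ] ≤ ∫ ω, X ω ^ 2 ∂μ := variance_le_expectation_sq hX.aestronglyMeasurable
  linarith [variance_nonneg (μ[X | m]) μ]

theorem condExp_sub_condExp_ae_eq_zero {m : MeasurableSpace Ω} (hm : m ≤ m0)
    [SigmaFinite (μ.trim hm)] {X : Ω → ℝ} (hX : Integrable X μ) :
    μ[X - μ[X | m] | m] =ᵐ[μ] 0 := by
  filter_upwards [condExp_sub hX integrable_condExp m] with ω hω
  rw [hω, condExp_of_stronglyMeasurable hm stronglyMeasurable_condExp integrable_condExp]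
  simp

theorem ae_summable_mul_sub_condExp {m : ℕ → MeasurableSpace Ω} {F : ℕ → Ω → ℝ} {a : ℕ → ℝ}
    (hF : ∀ k, Integrable (F k) μ) (hsum : Summable fun k => |a k| * ∫ ω, |F k ω| ∂μ) :
    ∀ᵐ ω ∂μ, Summable fun k => a k * (F k ω - (μ[F k | m k]) ω) := by
  have habs : ∀ G : ℕ → Ω → ℝ, (∀ k, Integrable (G k) μ) →
      (∀ k, ∫ ω, |G k ω| ∂μ ≤ ∫ ω, |F k ω| ∂μ) →
      ∀ᵐ ω ∂μ, Summable fun k => |a k * G k ω| := by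
    intro G hG hGF
    have hbound : ∀ k,
        eLpNorm (a k • G k) 1 μ ≤ ENNReal.ofReal (|a k| * ∫ ω, |F k ω| ∂μ) := by
      intro k
      rw [eLpNorm_one_eq_lintegral_enorm,
        ← ofReal_integral_norm_eq_lintegral_enorm ((hG k).smul (a k))]
      refine ENNReal.ofReal_le_ofReal ?_
      simp only [Pi.smul_apply, smul_eq_mul, norm_mul, Real.norm_eq_abs, integral_const_mul]
      exact mul_le_mul_of_nonneg_left (hGF k) (abs_nonneg _)
    have hne : ∑' k, eLpNorm (a k • G k) 1 μ ≠ ∞ := by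
      refine ne_top_of_le_ne_top ?_ (ENNReal.tsum_le_tsum hbound)
      rw [← ENNReal.ofReal_tsum_of_nonneg (fun k => by positivity) hsum]
      exact ENNReal.ofReal_ne_top
    simpa [Real.norm_eq_abs] using summable_norm_of_tsum_eLpNorm_ne_top le_rfl
      (fun k => ((hG k).const_mul (a k)).aestronglyMeasurable) hne
  filter_upwards [habs F hF fun k => le_rfl,
    habs (fun k => μ[F k | m k]) (fun k => integrable_condExp) fun k => integral_abs_condExp_le _]
    with ω h1 h2
  simpa [mul_sub] using h1.of_abs.sub h2.of_abs

theorem ae_exists_tendsto_sum_mul_sub_condExp [IsProbabilityMeasure μ] {X : ℕ → Ω → ℝ}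
    {a : ℕ → ℝ} (hmeas : ∀ k, StronglyMeasurable[ℱ (k + 1)] (X k)) (hL2 : ∀ k, MemLp (X k) 2 μ)
    (hsum : Summable fun k => a k ^ 2 * ∫ ω, X k ω ^ 2 ∂μ) :
    ∀ᵐ ω ∂μ, ∃ l, Tendsto (fun n => ∑ k ∈ range n, a k * (X k ω - (μ[X k | ℱ k]) ω))
      atTop (𝓝 l) := by
  have hcL2 : ∀ k, MemLp (X k - μ[X k | ℱ k]) 2 μ :=
    fun k => (hL2 k).sub ((hL2 k).condExp one_le_two)
  refine ae_exists_tendsto_sum_of_condExp_eq_zero (d := fun k => a k • (X k - μ[X k | ℱ k]))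
    (fun k => ((hmeas k).sub (stronglyMeasurable_condExp.mono (ℱ.mono k.le_succ))).const_smul _)
    (fun k => (hcL2 k).const_smul (a k)) (fun k => ?_)
    (hsum.of_nonneg_of_le (fun k => integral_nonneg fun ω => sq_nonneg _) fun k => ?_)
  · filter_upwards [condExp_smul (a k) (X k - μ[X k | ℱ k]) (ℱ k),
      condExp_sub_condExp_ae_eq_zero (ℱ.le k) ((hL2 k).integrable one_le_two)] with ω h1 h2
    simp [h1, h2]
  · simp only [Pi.smul_apply, Pi.sub_apply, smul_eq_mul, mul_pow, integral_const_mul]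
    exact mul_le_mul_of_nonneg_left (integral_sq_sub_condExp_le (ℱ.le k) (hL2 k)) (sq_nonneg _)

end Martingale

section Domination

variable {Ω : Type*} {m0 : MeasurableSpace Ω} {μ : Measure Ω}

theorem lintegral_le_of_meas_lt_le {f g : Ω → ℝ} (hf : AEMeasurable f μ) (hf0 : 0 ≤ᵐ[μ] f)
    (hg : AEMeasurable g μ) (hg0 : 0 ≤ᵐ[μ] g) {C : ℝ≥0}
    (h : ∀ t, 0 < t → μ {ω | t < f ω} ≤ C * μ {ω | t < g ω}) :
    ∫⁻ ω, ENNReal.ofReal (f ω) ∂μ ≤ C * ∫⁻ ω, ENNReal.ofReal (g ω) ∂μ := by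
  rw [lintegral_eq_lintegral_meas_lt μ hf0 hf, lintegral_eq_lintegral_meas_lt μ hg0 hg,
    ← lintegral_const_mul' _ _ ENNReal.coe_ne_top]
  exact setLIntegral_mono' measurableSet_Ioi h

theorem integral_le_of_meas_lt_le {f g : Ω → ℝ} (hf : Integrable f μ) (hf0 : 0 ≤ᵐ[μ] f)
    (hg : Integrable g μ) (hg0 : 0 ≤ᵐ[μ] g) {C : ℝ≥0}
    (h : ∀ t, 0 < t → μ {ω | t < f ω} ≤ C * μ {ω | t < g ω}) :
    ∫ ω, f ω ∂μ ≤ C * ∫ ω, g ω ∂μ := by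
  have := lintegral_le_of_meas_lt_le hf.aemeasurable hf0 hg.aemeasurable hg0 h
  rw [← ofReal_integral_eq_lintegral_ofReal hf hf0,
    ← ofReal_integral_eq_lintegral_ofReal hg hg0, ← ENNReal.ofReal_coe_nnreal,
    ← ENNReal.ofReal_mul C.coe_nonneg] at this
  exact (ENNReal.ofReal_le_ofReal_iff
    (mul_nonneg C.coe_nonneg (integral_nonneg_of_ae hg0))).1 this

theorem MeasureTheory.AEStronglyMeasurable.integrable_min_abs_sq [IsFiniteMeasure μ]
    {Z : Ω → ℝ} (hZ : AEStronglyMeasurable Z μ) {A : ℝ} (hA : 0 ≤ A) :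
    Integrable (fun ω => min |Z ω| A ^ 2) μ :=
  Integrable.of_bound ((hZ.norm.inf aestronglyMeasurable_const).pow 2) (A ^ 2)
    (ae_of_all _ fun ω => by
      rw [Real.norm_eq_abs, abs_of_nonneg (sq_nonneg _)]
      exact pow_le_pow_left₀ (le_min (abs_nonneg _) hA) (min_le_right _ _) 2)

theorem MeasureTheory.Integrable.ite_lt_abs {Z : Ω → ℝ} (hZ : Integrable Z μ) (a : ℝ) :
    Integrable (fun ω => if a < |Z ω| then |Z ω| else 0) μ := by
  have hφ : Measurable fun v : ℝ => if a < |v| then |v| else 0 :=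
    Measurable.ite (measurableSet_lt measurable_const continuous_abs.measurable)
      continuous_abs.measurable measurable_const
  refine hZ.abs.mono (hφ.comp_aemeasurable hZ.aemeasurable).aestronglyMeasurable
    (ae_of_all _ fun ω => ?_)
  split_ifs <;> simp

variable {Y V : Ω → ℝ} {C : ℝ≥0}

theorem MeasureTheory.AEStronglyMeasurable.integrable_of_meas_lt_abs_le
    (hY : AEStronglyMeasurable Y μ) (hV : Integrable V μ)
    (hdom : ∀ x, 0 < x → μ {ω | x < |Y ω|} ≤ C * μ {ω | x < |V ω|}) : Integrable Y μ := by
  refine ⟨hY, (hasFiniteIntegral_iff_norm Y).2 ?_⟩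
  refine (lintegral_le_of_meas_lt_le hY.aemeasurable.norm (ae_of_all _ fun _ => norm_nonneg _)
    hV.aemeasurable.norm (ae_of_all _ fun _ => norm_nonneg _) hdom).trans_lt ?_
  exact ENNReal.mul_lt_top ENNReal.coe_lt_top ((hasFiniteIntegral_iff_norm V).1 hV.2)

theorem meas_lt_comp_abs_le_of_iff
    (hdom : ∀ x, 0 < x → μ {ω | x < |Y ω|} ≤ C * μ {ω | x < |V ω|}) {φ : ℝ → ℝ} {t x : ℝ}
    (hx : 0 < x) (hφ : ∀ s, 0 ≤ s → (t < φ s ↔ x < s)) :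
    μ {ω | t < φ |Y ω|} ≤ C * μ {ω | t < φ |V ω|} := by
  have hset (Z : Ω → ℝ) : {ω | t < φ |Z ω|} = {ω | x < |Z ω|} := by
    ext ω; exact hφ _ (abs_nonneg _)
  rw [hset Y, hset V]
  exact hdom x hx

theorem integral_truncation_sq_le [IsFiniteMeasure μ]
    (hdom : ∀ x, 0 < x → μ {ω | x < |Y ω|} ≤ C * μ {ω | x < |V ω|})
    (hY : AEStronglyMeasurable Y μ) (hV : AEStronglyMeasurable V μ) {A : ℝ} (hA : 0 ≤ A) :
    ∫ ω, truncation Y A ω ^ 2 ∂μ ≤ C * ∫ ω, min |V ω| A ^ 2 ∂μ := by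
  calc ∫ ω, truncation Y A ω ^ 2 ∂μ ≤ ∫ ω, min |Y ω| A ^ 2 ∂μ := by
        refine integral_mono hY.memLp_truncation.integrable_sq (hY.integrable_min_abs_sq hA)
          fun ω => ?_
        rw [← sq_abs]
        exact pow_le_pow_left₀ (abs_nonneg _) (le_min (abs_truncation_le_abs_self _ _ _)
          ((abs_truncation_le_bound _ _ _).trans_eq (abs_of_nonneg hA))) 2
    _ ≤ C * ∫ ω, min |V ω| A ^ 2 ∂μ := by
        refine integral_le_of_meas_lt_le (hY.integrable_min_abs_sq hA)
          (ae_of_all _ fun _ => sq_nonneg _) (hV.integrable_min_abs_sq hA)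
          (ae_of_all _ fun _ => sq_nonneg _) fun t ht => ?_
        by_cases htA : √t < A
        · refine meas_lt_comp_abs_le_of_iff (φ := fun s => min s A ^ 2) hdom
            (Real.sqrt_pos.2 ht) fun s hs => ?_
          rw [← Real.sqrt_lt_sqrt_iff ht.le, Real.sqrt_sq (le_min hs hA), lt_min_iff,
            and_iff_left htA]
        · have : {ω | t < min |Y ω| A ^ 2} = ∅ := by
            refine Set.eq_empty_iff_forall_notMem.2 fun ω (hω : t < _) => hω.not_ge ?_
            calc min |Y ω| A ^ 2 ≤ √t ^ 2 := pow_le_pow_left₀ (le_min (abs_nonneg _) hA)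
                  ((min_le_right _ _).trans (not_lt.1 htA)) 2
              _ = t := Real.sq_sqrt ht.le
          simp [this]

theorem abs_sub_truncation_le_ite {a A : ℝ} (haA : a < A) (ω : Ω) :
    |Y ω - truncation Y A ω| ≤ if a < |Y ω| then |Y ω| else 0 := by
  by_cases h : Y ω ∈ Set.Ioc (-A) A
  · simp only [truncation, Function.comp_apply, Set.indicator_of_mem h, id, sub_self, abs_zero]
    split_ifs <;> simp
  · have hAY : A ≤ |Y ω| :=
      le_abs'.2 ((not_and_or.1 (Set.mem_Ioc.not.1 h)).imp not_lt.1 fun h' => (not_le.1 h').le)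
    simp [truncation, Set.indicator_of_notMem h, haA.trans_le hAY]

theorem integral_abs_sub_truncation_le
    (hdom : ∀ x, 0 < x → μ {ω | x < |Y ω|} ≤ C * μ {ω | x < |V ω|})
    (hY : Integrable Y μ) (hV : Integrable V μ) {a A : ℝ} (haA : a < A) :
    ∫ ω, |Y ω - truncation Y A ω| ∂μ ≤ C * ∫ ω, (if a < |V ω| then |V ω| else 0) ∂μ := by
  have hT : Integrable (truncation Y A) μ := hY.mono hY.1.truncation (ae_of_all _ fun ω => by
    simpa only [Real.norm_eq_abs] using abs_truncation_le_abs_self Y A ω)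
  calc ∫ ω, |Y ω - truncation Y A ω| ∂μ ≤ ∫ ω, (if a < |Y ω| then |Y ω| else 0) ∂μ :=
        integral_mono (hY.sub hT).abs (hY.ite_lt_abs a) (abs_sub_truncation_le_ite haA)
    _ ≤ C * ∫ ω, (if a < |V ω| then |V ω| else 0) ∂μ := by
        refine integral_le_of_meas_lt_le (hY.ite_lt_abs a) (ae_of_all _ fun ω => ?_)
          (hV.ite_lt_abs a) (ae_of_all _ fun ω => ?_) fun t ht => meas_lt_comp_abs_le_of_iff
            (φ := fun s => if a < s then s else 0) (x := max t a) hdom (lt_max_of_lt_left ht)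
            fun s hs => ?_
        · dsimp only; split_ifs <;> simp
        · dsimp only; split_ifs <;> simp
        · split_ifs with h
          · rw [max_lt_iff]; exact ⟨fun h' => ⟨h', h⟩, fun h' => h'.1⟩
          · constructor <;> intro h' <;> linarith [le_max_right t a, le_max_left t a]

end Domination

section Summability

variable {Ω : Type*} {m0 : MeasurableSpace Ω} {μ : Measure Ω} {Y : ℕ → Ω → ℝ} {V : Ω → ℝ}
  {C : ℝ≥0}

theorem summable_inv_sq_mul_integral_truncation_sq [IsFiniteMeasure μ]
    (hdom : ∀ k x, 0 < x → μ {ω | x < |Y k ω|} ≤ C * μ {ω | x < |V ω|})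
    (hY : ∀ k, AEStronglyMeasurable (Y k) μ) (hV : Integrable V μ) :
    Summable fun k : ℕ => (k + 1 : ℝ)⁻¹ ^ 2 * ∫ ω, truncation (Y k) (k + 1) ω ^ 2 ∂μ := by
  have hmin : ∀ k : ℕ, Integrable (fun ω => min |V ω| (k + 1) ^ 2) μ :=
    fun k => hV.1.integrable_min_abs_sq (by positivity)
  refine summable_of_sum_range_le (c := C * ∫ ω, 2 * |V ω| ∂μ)
    (fun k => mul_nonneg (sq_nonneg _) (integral_nonneg fun _ => sq_nonneg _)) fun n => ?_
  calc ∑ k ∈ range n, (k + 1 : ℝ)⁻¹ ^ 2 * ∫ ω, truncation (Y k) (k + 1) ω ^ 2 ∂μ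
      ≤ ∑ k ∈ range n, (k + 1 : ℝ)⁻¹ ^ 2 * (C * ∫ ω, min |V ω| (k + 1) ^ 2 ∂μ) :=
        sum_le_sum fun k _ => mul_le_mul_of_nonneg_left
          (integral_truncation_sq_le (hdom k) (hY k) hV.1 (by positivity)) (sq_nonneg _)
    _ = C * ∫ ω, ∑ k ∈ range n, (k + 1 : ℝ)⁻¹ ^ 2 * min |V ω| (k + 1) ^ 2 ∂μ := by
        rw [integral_finsetSum _ fun k _ => (hmin k).const_mul _, mul_sum]
        simp only [integral_const_mul]
        exact sum_congr rfl fun k _ => mul_left_comm _ _ _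
    _ ≤ C * ∫ ω, 2 * |V ω| ∂μ :=
        mul_le_mul_of_nonneg_left (integral_mono (integrable_finsetSum _ fun k _ =>
          (hmin k).const_mul _) (hV.abs.const_mul 2)
          fun ω => sum_range_min_sq_mul_inv_sq_le (abs_nonneg _) n) C.coe_nonneg

theorem summable_inv_mul_integral_abs_sub_truncation
    (hdom : ∀ k x, 0 < x → μ {ω | x < |Y k ω|} ≤ C * μ {ω | x < |V ω|})
    (hY : ∀ k, Integrable (Y k) μ) (hV : Integrable V μ)
    (hVlog : Integrable (fun ω => |V ω| * max (Real.log |V ω|) 0) μ) :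
    Summable fun k : ℕ => (k + 1 : ℝ)⁻¹ * ∫ ω, |Y k ω - truncation (Y k) (k + 1) ω| ∂μ := by
  refine summable_of_sum_range_le
    (c := C * ∫ ω, (2 * |V ω| + |V ω| * max (Real.log |V ω|) 0) ∂μ)
    (fun k => mul_nonneg (by positivity) (integral_nonneg fun _ => abs_nonneg _)) fun n => ?_
  calc ∑ k ∈ range n, (k + 1 : ℝ)⁻¹ * ∫ ω, |Y k ω - truncation (Y k) (k + 1) ω| ∂μ
      ≤ ∑ k ∈ range n,
          (k + 1 : ℝ)⁻¹ * (C * ∫ ω, (if (k : ℝ) < |V ω| then |V ω| else 0) ∂μ) :=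
        sum_le_sum fun k _ => mul_le_mul_of_nonneg_left (integral_abs_sub_truncation_le (hdom k)
          (hY k) hV (lt_add_one _)) (by positivity)
    _ = C * ∫ ω, ∑ k ∈ range n,
          (k + 1 : ℝ)⁻¹ * (if (k : ℝ) < |V ω| then |V ω| else 0) ∂μ := by
        rw [integral_finsetSum _ fun k _ => (hV.ite_lt_abs _).const_mul _, mul_sum]
        simp only [integral_const_mul]
        exact sum_congr rfl fun k _ => mul_left_comm _ _ _
    _ ≤ C * ∫ ω, (2 * |V ω| + |V ω| * max (Real.log |V ω|) 0) ∂μ :=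
        mul_le_mul_of_nonneg_left (integral_mono (integrable_finsetSum _ fun k _ =>
          (hV.ite_lt_abs _).const_mul _) ((hV.abs.const_mul 2).add hVlog)
          fun ω => sum_range_ite_lt_mul_inv_le (abs_nonneg _) n) C.coe_nonneg

end Summability

theorem ae_tendsto_inv_mul_sum_sub_condExp_of_dominated {Ω : Type*} {m0 : MeasurableSpace Ω}
    {μ : Measure Ω} [IsProbabilityMeasure μ] {ℱ : Filtration ℕ m0} {Y : ℕ → Ω → ℝ}
    (hY : ∀ k, StronglyMeasurable[ℱ (k + 1)] (Y k)) {V : Ω → ℝ} {C : ℝ≥0}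
    (hV : Integrable V μ) (hVlog : Integrable (fun ω => |V ω| * max (Real.log |V ω|) 0) μ)
    (hdom : ∀ k x, 0 < x → μ {ω | x < |Y k ω|} ≤ C * μ {ω | x < |V ω|}) :
    ∀ᵐ ω ∂μ, Tendsto (fun n : ℕ => (n : ℝ)⁻¹ * ∑ k ∈ range n, (Y k ω - (μ[Y k | ℱ k]) ω))
      atTop (𝓝 0) := by
  set T : ℕ → Ω → ℝ := fun k => truncation (Y k) (k + 1)
  have hYm : ∀ k, AEStronglyMeasurable (Y k) μ :=
    fun k => ((hY k).mono (ℱ.le _)).aestronglyMeasurable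
  have hYint : ∀ k, Integrable (Y k) μ :=
    fun k => (hYm k).integrable_of_meas_lt_abs_le hV (hdom k)
  have hTint : ∀ k, Integrable (T k) μ := fun k => (hYm k).integrable_truncation
  have hTm : ∀ k, StronglyMeasurable[ℱ (k + 1)] (T k) := fun k =>
    ((measurable_id.indicator measurableSet_Ioc).comp (hY k).measurable).stronglyMeasurable
  have hmart := ae_exists_tendsto_sum_mul_sub_condExp (a := fun k : ℕ => (k + 1 : ℝ)⁻¹) hTm
    (fun k => (hYm k).memLp_truncation) (summable_inv_sq_mul_integral_truncation_sq hdom hYm hV)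
  have htail := ae_summable_mul_sub_condExp (m := fun k => ℱ k)
    (a := fun k : ℕ => (k + 1 : ℝ)⁻¹) (fun k => (hYint k).sub (hTint k))
    ((summable_inv_mul_integral_abs_sub_truncation hdom hYint hV hVlog).congr fun k => by
      rw [abs_of_pos (by positivity)]; rfl)
  have hsplit :
      ∀ᵐ ω ∂μ, ∀ k, (μ[Y k | ℱ k]) ω = (μ[T k | ℱ k]) ω + (μ[Y k - T k | ℱ k]) ω :=
    ae_all_iff.2 fun k => by
      filter_upwards [condExp_add (m := ℱ k) (hTint k) ((hYint k).sub (hTint k))] with ω hω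
      rw [← Pi.add_apply, ← hω, add_sub_cancel]
  filter_upwards [hmart, htail, hsplit] with ω ⟨l, hl⟩ hsum hω
  refine tendsto_inv_mul_sum_of_tendsto_sum_inv_mul
    ((hl.add hsum.hasSum.tendsto_sum_nat).congr fun n => ?_)
  rw [← sum_add_distrib]
  refine sum_congr rfl fun k _ => ?_
  rw [hω k]
  simp only [Pi.sub_apply]
  ring

theorem stmt19_general {Ω : Type*} {m0 : MeasurableSpace Ω} (μ : Measure Ω)
    [IsProbabilityMeasure μ]
    (ℋ : Filtration ℕ m0)
    (U : ℕ → Ω → ℝ)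
    (hadapted : ∀ k, 1 ≤ k → StronglyMeasurable[ℋ k] (U k))
    (c : ℝ)
    (V : Ω → ℝ)
    (hVint : Integrable (fun ω => |V ω| * max (Real.log |V ω|) 0) μ)
    (hVint' : Integrable V μ)
    (hdom : ∀ k, 1 ≤ k → ∀ x : ℝ, 0 < x →
      μ {ω | x < |U k ω|} ≤ ENNReal.ofReal c * μ {ω | x < |V ω|}) :
    ∀ᵐ ω ∂μ, Tendsto (fun n : ℕ => (n : ℝ)⁻¹ *
        ∑ k ∈ Finset.Icc 1 n, (U k ω - (μ[U k | ℋ (k - 1)]) ω))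
      atTop (nhds 0) := by
  filter_upwards [ae_tendsto_inv_mul_sum_sub_condExp_of_dominated (ℱ := ℋ) (C := c.toNNReal)
    (fun k => hadapted (k + 1) (Nat.le_add_left 1 k)) hVint' hVint
    fun k => hdom (k + 1) (Nat.le_add_left 1 k)] with ω hω
  refine hω.congr fun n => ?_
  rw [← Finset.Ico_add_one_right_eq_Icc, sum_Ico_eq_sum_range]
  simp [add_comm]

/-- Lemma 17 (martingale strong law, cf. Hall–Heyde): if `{U_k}` is adapted
to the filtration `{H_k}` and stochastically dominated, up to a constant
`c`, by a random variable `V` with `E[|V| log⁺ |V|] < ∞`, then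
`(1/n) ∑_{k=1}^n (U_k - E[U_k | H_{k-1}]) → 0` almost surely. -/
theorem stmt19 {Ω : Type*} {m0 : MeasurableSpace Ω} (μ : Measure Ω)
    [IsProbabilityMeasure μ]
    (ℋ : Filtration ℕ m0)
    (U : ℕ → Ω → ℝ)
    (hmeas : ∀ k, Measurable (U k))
    (hadapted : ∀ k, 1 ≤ k → StronglyMeasurable[ℋ k] (U k))
    (c : ℝ) (hc : 0 < c)
    (V : Ω → ℝ) (hVmeas : Measurable V)
    (hVint : Integrable (fun ω => |V ω| * max (Real.log |V ω|) 0) μ)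
    (hVint' : Integrable V μ)
    (hdom : ∀ k, 1 ≤ k → ∀ x : ℝ, 0 < x →
      μ {ω | x < |U k ω|} ≤ ENNReal.ofReal c * μ {ω | x < |V ω|}) :
    ∀ᵐ ω ∂μ, Tendsto (fun n : ℕ => (n : ℝ)⁻¹ *
        ∑ k ∈ Finset.Icc 1 n, (U k ω - (μ[U k | ℋ (k - 1)]) ω))
      atTop (nhds 0) :=
  stmt19_general μ ℋ U hadapted c V hVint hVint' hdom
end
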